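/- arXiv:2503.11713 — 15 statements merged into one kernel-verified Lean document; each statement's English description precedes it below -/
import Mathlib

section
/- Existence of performatively multicalibrated predictors: For any outcome-performative distribution map D, any finite collection C of functions c : X × [0,1] → [−1,1] that are measurable in x and continuous in the prediction coordinate p, and any ε > 0, there exists a randomized predictor f that is ε-performatively multicalibrated with respect to C. -/
/-!
Let `m (x, p)` be the mean of `Dy (x, p)`, so the calibration error of `c` at `(x, p)` is
`c x p * (m (x, p) - p)`. For each `x` choose, measurably in `x`, a grid `i / N` of `[0, 1]` so
fine that every `c x` moves by at most `ε` between neighbours, and the first grid cell `[p₀, p₁]`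
with `m (x, p₁) ≤ p₁`; then `p₀ ≤ m (x, p₀)`. Randomizing between `p₀` and `p₁` with the weights
that cancel the drifts `m (x, p₀) - p₀ ≥ 0` and `m (x, p₁) - p₁ ≤ 0` leaves an error of at most
`|c x p₀ - c x p₁| ≤ ε` at every `x`. No continuity of `m` in `p` is needed, only this sign change
of the drift along the grid.
-/

open MeasureTheory ProbabilityTheory Set Filter

section TwoPointMeasure

variable {α : Type*} [MeasurableSpace α]

noncomputable def twoPointMeasure (t : ℝ) (a b : α) : Measure α :=
  ENNReal.ofReal t • Measure.dirac a + ENNReal.ofReal (1 - t) • Measure.dirac b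

variable {t : ℝ} {a b : α}

lemma twoPointMeasure_apply_eq_one (ht₀ : 0 ≤ t) (ht₁ : t ≤ 1) {s : Set α} (hs : MeasurableSet s)
    (ha : a ∈ s) (hb : b ∈ s) : twoPointMeasure t a b s = 1 := by
  simp only [twoPointMeasure, Measure.coe_add, Measure.coe_smul, Pi.add_apply, Pi.smul_apply,
    smul_eq_mul, Measure.dirac_apply' _ hs, indicator_of_mem ha, indicator_of_mem hb,
    Pi.one_apply, mul_one]
  rw [← ENNReal.ofReal_add ht₀ (sub_nonneg.2 ht₁), add_sub_cancel, ENNReal.ofReal_one]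

lemma isProbabilityMeasure_twoPointMeasure (ht₀ : 0 ≤ t) (ht₁ : t ≤ 1) :
    IsProbabilityMeasure (twoPointMeasure t a b) :=
  ⟨twoPointMeasure_apply_eq_one ht₀ ht₁ MeasurableSet.univ (mem_univ a) (mem_univ b)⟩

lemma integral_twoPointMeasure [MeasurableSingletonClass α] {E : Type*} [NormedAddCommGroup E]
    [NormedSpace ℝ E] [CompleteSpace E] (ht₀ : 0 ≤ t) (ht₁ : t ≤ 1) (g : α → E) :
    ∫ x, g x ∂twoPointMeasure t a b = t • g a + (1 - t) • g b := by
  rw [twoPointMeasure, integral_add_measure, integral_smul_measure, integral_smul_measure,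
    integral_dirac, integral_dirac, ENNReal.toReal_ofReal ht₀,
    ENNReal.toReal_ofReal (sub_nonneg.2 ht₁)]
  all_goals exact (integrable_dirac enorm_lt_top).smul_measure ENNReal.ofReal_ne_top

lemma Measurable.twoPointMeasure {X : Type*} [MeasurableSpace X] {t : X → ℝ} {a b : X → α}
    (ht : Measurable t) (ha : Measurable a) (hb : Measurable b) :
    Measurable fun x => _root_.twoPointMeasure (t x) (a x) (b x) := by
  refine Measure.measurable_of_measurable_coe _ fun s hs => ?_
  simp only [_root_.twoPointMeasure, Measure.coe_add, Measure.coe_smul, Pi.add_apply,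
    Pi.smul_apply, smul_eq_mul, Measure.dirac_apply' _ hs]
  fun_prop (disch := exact hs)

end TwoPointMeasure

/-- The weight `t` with `t * u₀ + (1 - t) * u₁ = 0`. -/
noncomputable def balancingWeight (u₀ u₁ : ℝ) : ℝ := u₁ / (u₁ - u₀)

lemma balancingWeight_mem_Icc {u₀ u₁ : ℝ} (h₀ : 0 ≤ u₀) (h₁ : u₁ ≤ 0) :
    balancingWeight u₀ u₁ ∈ Icc 0 1 := by
  refine ⟨div_nonneg_of_nonpos h₁ (by linarith), ?_⟩
  rw [balancingWeight, ← neg_div_neg_eq, neg_sub]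
  exact div_le_one_of_le₀ (by linarith) (by linarith)

lemma abs_balancingWeight_mix_le {u₀ u₁ c₀ c₁ : ℝ} (h₀ : 0 ≤ u₀) (h₀' : u₀ ≤ 1) (h₁ : u₁ ≤ 0) :
    |balancingWeight u₀ u₁ * (c₀ * u₀) + (1 - balancingWeight u₀ u₁) * (c₁ * u₁)| ≤
      |c₀ - c₁| := by
  obtain ⟨ht₀, ht₁⟩ := balancingWeight_mem_Icc h₀ h₁
  have hbalance : balancingWeight u₀ u₁ * (c₀ * u₀) + (1 - balancingWeight u₀ u₁) * (c₁ * u₁) =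
      balancingWeight u₀ u₁ * u₀ * (c₀ - c₁) := by
    rcases eq_or_ne u₁ u₀ with h | h
    · obtain rfl : u₀ = 0 := by linarith
      obtain rfl : u₁ = 0 := h
      simp
    · rw [balancingWeight]
      field_simp [sub_ne_zero.2 h]
      ring
  rw [hbalance, abs_mul, abs_of_nonneg (mul_nonneg ht₀ h₀)]
  exact mul_le_of_le_one_left (abs_nonneg _) (mul_le_one₀ ht₁ h₀ h₀')

lemma natCast_div_mem_Icc {i N : ℕ} (h : i ≤ N) : (i : ℝ) / N ∈ Icc (0 : ℝ) 1 :=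
  ⟨by positivity, div_le_one_of_le₀ (by exact_mod_cast h) (Nat.cast_nonneg N)⟩

lemma eventually_forall_abs_sub_le_of_continuousOn {g : ℝ → ℝ} (hg : ContinuousOn g (Icc 0 1))
    {ε : ℝ} (hε : 0 < ε) :
    ∀ᶠ N : ℕ in atTop, ∀ i < N, |g (i / N) - g ((i + 1 : ℕ) / N)| ≤ ε := by
  obtain ⟨δ, hδ, hgδ⟩ := Metric.uniformContinuousOn_iff.1
    (isCompact_Icc.uniformContinuousOn_of_continuous hg) ε hε
  obtain ⟨N₀, hN₀⟩ := exists_nat_one_div_lt hδ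
  filter_upwards [eventually_gt_atTop N₀] with N hN i hi
  have hdist : dist ((i : ℝ) / N) ((i + 1 : ℕ) / N) < δ := by
    rw [Real.dist_eq, Nat.cast_succ, ← sub_div, sub_add_cancel_left, abs_div, abs_neg, abs_one,
      Nat.abs_cast]
    calc 1 / (N : ℝ) ≤ 1 / (N₀ + 1) :=
          one_div_le_one_div_of_le (by positivity) (by exact_mod_cast hN)
      _ < δ := hN₀
  rw [← Real.dist_eq]
  exact (hgδ _ (natCast_div_mem_Icc hi.le) _ (natCast_div_mem_Icc hi) hdist).le

lemma natCast_div_le_of_forall_lt_not_le {g : ℝ → ℝ} (hg : ∀ p, 0 ≤ g p) {N i : ℕ}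
    (hi : ∀ j < i, ¬ g ((j + 1 : ℕ) / N) ≤ (j + 1 : ℕ) / N) : (i : ℝ) / N ≤ g (i / N) := by
  cases i with
  | zero => simpa using hg 0
  | succ j => exact (not_le.1 (hi j j.lt_succ_self)).le

lemma exists_measurable_nat_find {X : Type*} [MeasurableSpace X] {P : X → ℕ → Prop}
    (hP : ∀ n, MeasurableSet {x | P x n}) (h : ∀ x, ∃ n, P x n) :
    ∃ N : X → ℕ, Measurable N ∧ (∀ x, P x (N x)) ∧ ∀ x, ∀ n < N x, ¬ P x n := by
  classical
  exact ⟨fun x => Nat.find (h x), measurable_find h hP, fun x => Nat.find_spec (h x),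
    fun x _ => Nat.find_min (h x)⟩

section Bracket

variable {X : Type*} [MeasurableSpace X]

theorem exists_measurable_fine_bracket {m : X × ℝ → ℝ} (hm_meas : Measurable m)
    (hm : ∀ z, m z ∈ Icc 0 1) {C : Finset (X → ℝ → ℝ)}
    (hC_meas : ∀ c ∈ C, ∀ p : ℝ, Measurable fun x => c x p)
    (hC_cont : ∀ c ∈ C, ∀ x : X, ContinuousOn (c x) (Icc 0 1)) {ε : ℝ} (hε : 0 < ε) :
    ∃ p₀ p₁ : X → ℝ, Measurable p₀ ∧ Measurable p₁ ∧
      (∀ x, p₀ x ∈ Icc 0 1 ∧ p₁ x ∈ Icc 0 1 ∧ p₀ x ≤ m (x, p₀ x) ∧ m (x, p₁ x) ≤ p₁ x) ∧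
      ∀ x, ∀ c ∈ C, |c x (p₀ x) - c x (p₁ x)| ≤ ε := by
  have hfine_meas (n : ℕ) : MeasurableSet
      {x | 0 < n ∧ ∀ c ∈ C, ∀ i < n, |c x (i / n) - c x ((i + 1 : ℕ) / n)| ≤ ε} := by
    simp only [ofPred_and, ofPred_forall]
    exact (MeasurableSet.const _).inter <| Finset.measurableSet_biInter C fun c hc =>
      .iInter fun _ => .iInter fun _ =>
        measurableSet_le ((hC_meas c hc _).sub (hC_meas c hc _)).abs measurable_const
  obtain ⟨N, hN_meas, hN, -⟩ := exists_measurable_nat_find hfine_meas fun x =>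
    ((eventually_gt_atTop 0).and ((eventually_all_finset C).2 fun c hc =>
      eventually_forall_abs_sub_le_of_continuousOn (hC_cont c hc x) hε)).exists
  have hlast : ∀ x, m (x, ((N x - 1 + 1 : ℕ) : ℝ) / N x) ≤ ((N x - 1 + 1 : ℕ) : ℝ) / N x := by
    intro x
    rw [Nat.sub_add_cancel (hN x).1, div_self (by exact_mod_cast (hN x).1.ne')]
    exact (hm _).2
  have hN_cast : Measurable fun x => (N x : ℝ) := measurable_from_nat.comp hN_meas
  obtain ⟨i, hi_meas, hi, hi_min⟩ := exists_measurable_nat_find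
    (P := fun x j => m (x, ((j + 1 : ℕ) : ℝ) / N x) ≤ ((j + 1 : ℕ) : ℝ) / N x)
    (fun j => measurableSet_le (hm_meas.comp (measurable_id.prodMk (measurable_const.div hN_cast)))
      (measurable_const.div hN_cast)) (fun x => ⟨_, hlast x⟩)
  have hi_lt : ∀ x, i x < N x := fun x =>
    Nat.lt_of_le_pred (hN x).1 (not_lt.1 fun h => hi_min x _ h (hlast x))
  refine ⟨fun x => (i x : ℝ) / N x, fun x => ((i x + 1 : ℕ) : ℝ) / N x,
    (measurable_from_nat.comp hi_meas).div hN_cast,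
    (measurable_from_nat.comp (hi_meas.add_const 1)).div hN_cast,
    fun x => ⟨natCast_div_mem_Icc (hi_lt x).le, natCast_div_mem_Icc (hi_lt x),
      natCast_div_le_of_forall_lt_not_le (fun p => (hm (x, p)).1) (hi_min x), hi x⟩,
    fun x c hc => (hN x).2 c hc _ (hi_lt x)⟩

theorem exists_markovKernel_abs_integral_mul_drift_le {m : X × ℝ → ℝ} (hm_meas : Measurable m)
    (hm : ∀ z, m z ≤ 1) {p₀ p₁ : X → ℝ} (hp₀ : Measurable p₀) (hp₁ : Measurable p₁)
    (hbracket : ∀ x, p₀ x ∈ Icc 0 1 ∧ p₁ x ∈ Icc 0 1 ∧ p₀ x ≤ m (x, p₀ x) ∧ m (x, p₁ x) ≤ p₁ x) :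
    ∃ f : Kernel X ℝ, IsMarkovKernel f ∧ (∀ x, f x (Icc 0 1) = 1) ∧
      ∀ x (g : ℝ → ℝ), |∫ p, g p * (m (x, p) - p) ∂f x| ≤ |g (p₀ x) - g (p₁ x)| := by
  set t : X → ℝ := fun x => balancingWeight (m (x, p₀ x) - p₀ x) (m (x, p₁ x) - p₁ x)
  have ht : ∀ x, t x ∈ Icc 0 1 := fun x => balancingWeight_mem_Icc
    (sub_nonneg.2 (hbracket x).2.2.1) (sub_nonpos.2 (hbracket x).2.2.2)
  have ht_meas : Measurable t := by
    have h₀ := hm_meas.comp (measurable_id.prodMk hp₀)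
    have h₁ := hm_meas.comp (measurable_id.prodMk hp₁)
    exact (h₁.sub hp₁).div ((h₁.sub hp₁).sub (h₀.sub hp₀))
  refine ⟨⟨fun x => twoPointMeasure (t x) (p₀ x) (p₁ x), ht_meas.twoPointMeasure hp₀ hp₁⟩,
    ⟨fun x => isProbabilityMeasure_twoPointMeasure (ht x).1 (ht x).2⟩,
    fun x => twoPointMeasure_apply_eq_one (ht x).1 (ht x).2 measurableSet_Icc (hbracket x).1
      (hbracket x).2.1, fun x g => ?_⟩
  obtain ⟨⟨hp₀_nonneg, -⟩, -, h₀, h₁⟩ := hbracket x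
  rw [Kernel.coe_mk, integral_twoPointMeasure (ht x).1 (ht x).2, smul_eq_mul, smul_eq_mul]
  exact abs_balancingWeight_mix_le (sub_nonneg.2 h₀) (by linarith [hm (x, p₀ x)])
    (sub_nonpos.2 h₁)

end Bracket

lemma integral_mul_sub {μ : Measure ℝ} [IsProbabilityMeasure μ] (hμ : Integrable (fun y => y) μ)
    (c p : ℝ) : ∫ y, c * (y - p) ∂μ = c * (∫ y, y ∂μ - p) := by
  rw [integral_const_mul, integral_sub hμ (integrable_const p), integral_const, probReal_univ,
    one_smul]

theorem exists_performatively_multicalibrated_predictor_general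
    {X : Type*} [MeasurableSpace X]
    (Dx : Measure X) [IsProbabilityMeasure Dx]
    (Dy : Kernel (X × ℝ) ℝ) [IsMarkovKernel Dy]
    (hDy : ∀ z : X × ℝ, Dy z (Icc (0:ℝ) 1) = 1)
    (C : Finset (X → ℝ → ℝ))
    (hC_meas : ∀ c ∈ C, ∀ p : ℝ, Measurable fun x => c x p)
    (hC_cont : ∀ c ∈ C, ∀ x : X, ContinuousOn (c x) (Icc (0:ℝ) 1))
    (ε : ℝ) (hε : 0 < ε) :
    ∃ f : Kernel X ℝ, IsMarkovKernel f ∧ (∀ x, f x (Icc (0:ℝ) 1) = 1) ∧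
      ∀ c ∈ C,
        |∫ x, ∫ p, ∫ y, c x p * (y - p) ∂(Dy (x, p)) ∂(f x) ∂Dx| ≤ ε := by
  set m : X × ℝ → ℝ := fun z => ∫ y, y ∂Dy z
  have hDy_ae (z : X × ℝ) : ∀ᵐ y ∂Dy z, y ∈ Icc (0 : ℝ) 1 :=
    (mem_ae_iff_prob_eq_one measurableSet_Icc).2 (hDy z)
  have hDy_int (z : X × ℝ) : Integrable (fun y => y) (Dy z) :=
    Integrable.of_mem_Icc 0 1 aemeasurable_id (hDy_ae z)
  have hm (z : X × ℝ) : m z ∈ Icc 0 1 :=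
    (convex_Icc 0 1).integral_mem isClosed_Icc (hDy_ae z) (hDy_int z)
  have hm_meas : Measurable m := stronglyMeasurable_id.integral_kernel.measurable
  obtain ⟨p₀, p₁, hp₀, hp₁, hbracket, hosc⟩ :=
    exists_measurable_fine_bracket hm_meas hm hC_meas hC_cont hε
  obtain ⟨f, hf, hf_Icc, hf_drift⟩ :=
    exists_markovKernel_abs_integral_mul_drift_le hm_meas (fun z => (hm z).2) hp₀ hp₁ hbracket
  refine ⟨f, hf, hf_Icc, fun c hc => ?_⟩
  have hx (x : X) : ‖∫ p, ∫ y, c x p * (y - p) ∂Dy (x, p) ∂f x‖ ≤ ε := by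
    simp only [integral_mul_sub (hDy_int _), Real.norm_eq_abs]
    exact (hf_drift x (c x)).trans (hosc x c hc)
  simpa using norm_integral_le_of_norm_le_const (μ := Dx) (ae_of_all _ hx)

/-- **Existence of performatively multicalibrated predictors.**
For any outcome-performative distribution map (a feature distribution `Dx` together with a
measurable family `Dy (x, p)` of outcome distributions on `[0,1]`), any finite collection `C`
of functions `c : X × [0,1] → [−1,1]` measurable in `x` and continuous in `p`, and any
`ε > 0`, there exists a randomized predictor `f` (a Markov kernel from `X` to `[0,1]`)
that is `ε`-performatively multicalibrated with respect to `C`: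
`|E_{x ~ Dx, p ~ f x, y ~ Dy (x,p)} [c x p * (y − p)]| ≤ ε` for every `c ∈ C`. -/
theorem exists_performatively_multicalibrated_predictor
    {X : Type*} [MeasurableSpace X]
    (Dx : Measure X) [IsProbabilityMeasure Dx]
    (Dy : Kernel (X × ℝ) ℝ) [IsMarkovKernel Dy]
    (hDy : ∀ z : X × ℝ, Dy z (Icc (0:ℝ) 1) = 1)
    (C : Finset (X → ℝ → ℝ))
    (hC_meas : ∀ c ∈ C, ∀ p : ℝ, Measurable fun x => c x p)
    (hC_cont : ∀ c ∈ C, ∀ x : X, ContinuousOn (c x) (Icc (0:ℝ) 1))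
    (hC_bdd : ∀ c ∈ C, ∀ x : X, ∀ p ∈ Icc (0:ℝ) 1, c x p ∈ Icc (-1:ℝ) 1)
    (ε : ℝ) (hε : 0 < ε) :
    ∃ f : Kernel X ℝ, IsMarkovKernel f ∧ (∀ x, f x (Icc (0:ℝ) 1) = 1) ∧
      ∀ c ∈ C,
        |∫ x, ∫ p, ∫ y, c x p * (y - p) ∂(Dy (x, p)) ∂(f x) ∂Dx| ≤ ε :=
  exists_performatively_multicalibrated_predictor_general Dx Dy hDy C hC_meas hC_cont ε hε
end

section
/- Approximate Simon–Grunberg fixed points always exist: Let D_y be any measurable map from predictions p ∈ [0,1] to probability measures D_y(p) on [0,1]. For every ε > 0 there exists a probability measure μ on [0,1] (a randomized prediction) such that |∫_{[0,1]} ∫_{[0,1]} (y − p) dD_y(p)(y) dμ(p)| ≤ ε; that is, the expected outcome induced by the randomized prediction differs from its expected prediction by at most ε. -/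
open MeasureTheory ProbabilityTheory Set

lemma integrable_dirac' (g : ℝ → ℝ) (a : ℝ) : Integrable g (Measure.dirac a) := by
  refine (integrable_const (g a)).congr ?_
  rw [Filter.EventuallyEq, MeasureTheory.ae_dirac_eq]
  simp

lemma mix_measure (g : ℝ → ℝ) (lam : ℝ) (h0 : 0 ≤ lam) (h1 : lam ≤ 1) :
    ∃ μ : Measure ℝ, IsProbabilityMeasure μ ∧ μ (Icc (0:ℝ) 1) = 1 ∧
      ∫ p, g p ∂μ = lam * g 0 + (1 - lam) * g 1 := by
  refine ⟨ENNReal.ofReal lam • Measure.dirac 0 + ENNReal.ofReal (1 - lam) • Measure.dirac 1,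
    ?_, ?_, ?_⟩
  · constructor
    simp only [Measure.add_apply, Measure.smul_apply, smul_eq_mul, measure_univ, mul_one,
      ← ENNReal.ofReal_add h0 (by linarith : (0:ℝ) ≤ 1 - lam)]
    norm_num
  · have h01 : (0:ℝ) ∈ Icc (0:ℝ) 1 := by norm_num
    have h11 : (1:ℝ) ∈ Icc (0:ℝ) 1 := by norm_num
    simp [Measure.dirac_apply' _ measurableSet_Icc, h01, h11,
      ← ENNReal.ofReal_add h0 (by linarith : (0:ℝ) ≤ 1 - lam)]
  · rw [integral_add_measure ((integrable_dirac' g 0).smul_measure ENNReal.ofReal_ne_top)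
      ((integrable_dirac' g 1).smul_measure ENNReal.ofReal_ne_top),
      integral_smul_measure, integral_smul_measure, integral_dirac, integral_dirac,
      ENNReal.toReal_ofReal h0, ENNReal.toReal_ofReal (by linarith : (0:ℝ) ≤ 1 - lam)]
    simp [smul_eq_mul]; try ring

/-- **Approximate Simon–Grunberg fixed points always exist.**
Let `Dy` be any measurable map from predictions `p ∈ [0,1]` to probability measures
`Dy p` on `[0,1]`. For every `ε > 0` there exists a probability measure `μ` on `[0,1]`
(a randomized prediction) such that `|∫ p, ∫ y, (y − p) ∂(Dy p) ∂μ| ≤ ε`. -/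
theorem exists_approx_fixed_point_randomized_prediction
    (Dy : Kernel ℝ ℝ) [IsMarkovKernel Dy]
    (hDy : ∀ p ∈ Icc (0:ℝ) 1, Dy p (Icc (0:ℝ) 1) = 1) :
    ∀ ε > 0, ∃ μ : Measure ℝ, IsProbabilityMeasure μ ∧ μ (Icc (0:ℝ) 1) = 1 ∧
      |∫ p, ∫ y, (y - p) ∂(Dy p) ∂μ| ≤ ε := by
  intro ε hε
  set g : ℝ → ℝ := fun p => ∫ y, (y - p) ∂(Dy p) with hg
  have hae : ∀ p ∈ Icc (0:ℝ) 1, ∀ᵐ y ∂(Dy p), y ∈ Icc (0:ℝ) 1 := by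
    intro p hp
    rw [ae_iff]
    have := (prob_compl_eq_zero_iff measurableSet_Icc).2 (hDy p hp)
    simpa [Set.compl_def] using this
  have hA : 0 ≤ g 0 := by
    apply integral_nonneg_of_ae
    filter_upwards [hae 0 (by norm_num)] with y hy
    simp only [Pi.zero_apply]
    linarith [hy.1]
  have hB : g 1 ≤ 0 := by
    apply integral_nonpos_of_ae
    filter_upwards [hae 1 (by norm_num)] with y hy
    simp only [Pi.zero_apply]
    linarith [hy.2]
  by_cases h : g 0 - g 1 = 0
  · obtain ⟨μ, hμ1, hμ2, hμ3⟩ := mix_measure g 1 zero_le_one le_rfl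
    refine ⟨μ, hμ1, hμ2, ?_⟩
    have : g 0 = 0 := by linarith
    rw [hμ3, this]
    simp [abs_of_nonneg, hε.le]
  · have hpos : 0 < g 0 - g 1 := lt_of_le_of_ne (by linarith) (Ne.symm h)
    set lam : ℝ := -g 1 / (g 0 - g 1) with hlam
    have h0 : 0 ≤ lam := div_nonneg (by linarith) hpos.le
    have h1 : lam ≤ 1 := by
      rw [hlam, div_le_one hpos]
      linarith
    obtain ⟨μ, hμ1, hμ2, hμ3⟩ := mix_measure g lam h0 h1
    refine ⟨μ, hμ1, hμ2, ?_⟩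
    rw [hμ3]
    have : lam * g 0 + (1 - lam) * g 1 = 0 := by
      rw [hlam]
      field_simp
      ring
    rw [this]
    simpa using hε.le
end

section
/- Guarantee of the K29 algorithm (Proposition A.1, feature-map form): Let H be a real Hilbert space and Φ : X × [0,1] → H any map. Suppose a finite transcript (x_1,p_1,y_1),…,(x_T,p_T,y_T) with all p_t, y_t ∈ [0,1] satisfies the K29 invariant: for every t ∈ {1,…,T} and every y ∈ [0,1], (y − p_t)·⟨Φ(x_t,p_t), Σ_{i=1}^{t−1} (y_i − p_i)·Φ(x_i,p_i)⟩ ≤ 0. Then for every w ∈ H: |Σ_{t=1}^T ⟨w, Φ(x_t,p_t)⟩·(y_t − p_t)| ≤ ‖w‖ · √(Σ_{t=1}^T ‖Φ(x_t,p_t)‖² · (y_t − p_t)²). -/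
open Finset Set
open scoped RealInnerProductSpace

/-! The increments `f t = (y_t - p_t) • Φ(x_t, p_t)` have partial sums `S_t = ∑_{i<t} f i`, and
`‖S_{t+1}‖² = ‖S_t‖² + ‖f t‖² + 2 ⟪f t, S_t⟫`. Taking `y = y_t` in the K29 invariant makes every
cross term nonpositive, so `‖∑ f‖² ≤ ∑ ‖f t‖²`; Cauchy–Schwarz against `w` finishes. -/

section PartialSums

variable {ι E : Type*} [LinearOrder ι] [NormedAddCommGroup E] [InnerProductSpace ℝ E]

theorem norm_sum_sq_eq_sum_norm_sq_add_inner_partialSum (f : ι → E) (s : Finset ι) :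
    ‖∑ i ∈ s, f i‖ ^ 2 =
      ∑ t ∈ s, ‖f t‖ ^ 2 + 2 * ∑ t ∈ s, ⟪f t, ∑ i ∈ s with i < t, f i⟫ := by
  induction s using Finset.induction_on_max with
  | empty => simp
  | insert a s ha ih =>
    have ha' : a ∉ s := fun h => lt_irrefl a (ha a h)
    have below_a : (insert a s).filter (· < a) = s := by
      ext i
      simp only [mem_filter, Finset.mem_insert]
      exact ⟨fun ⟨h, hi⟩ => h.resolve_left hi.ne, fun h => ⟨Or.inr h, ha i h⟩⟩
    have below_s : ∑ t ∈ s, ⟪f t, ∑ i ∈ insert a s with i < t, f i⟫ =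
        ∑ t ∈ s, ⟪f t, ∑ i ∈ s with i < t, f i⟫ :=
      sum_congr rfl fun t ht => by rw [filter_insert, if_neg (ha t ht).not_gt]
    rw [sum_insert ha', sum_insert ha', sum_insert ha', below_a, below_s, norm_add_sq_real, ih]
    ring

theorem norm_sum_sq_le_sum_norm_sq_of_inner_partialSum_nonpos (f : ι → E) (s : Finset ι)
    (h : ∀ t ∈ s, ⟪f t, ∑ i ∈ s with i < t, f i⟫ ≤ 0) :
    ‖∑ i ∈ s, f i‖ ^ 2 ≤ ∑ t ∈ s, ‖f t‖ ^ 2 := by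
  rw [norm_sum_sq_eq_sum_norm_sq_add_inner_partialSum]
  linarith [sum_nonpos h]

end PartialSums

theorem k29_guarantee_general
    {X : Type*} {H : Type*} [NormedAddCommGroup H] [InnerProductSpace ℝ H]
    (Φ : X → ℝ → H) (T : ℕ) (x : Fin T → X) (p y : Fin T → ℝ)
    (hy : ∀ t, y t ∈ Icc (0:ℝ) 1)
    (hinv : ∀ t : Fin T, ∀ y' ∈ Icc (0:ℝ) 1,
      (y' - p t) *
        ⟪Φ (x t) (p t), ∑ i ∈ Finset.Iio t, (y i - p i) • Φ (x i) (p i)⟫ ≤ 0) :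
    ∀ w : H,
      |∑ t, ⟪w, Φ (x t) (p t)⟫ * (y t - p t)| ≤
        ‖w‖ * Real.sqrt (∑ t, ‖Φ (x t) (p t)‖ ^ 2 * (y t - p t) ^ 2) := by
  intro w
  set f : Fin T → H := fun t => (y t - p t) • Φ (x t) (p t)
  have hsum : ∑ t, ⟪w, Φ (x t) (p t)⟫ * (y t - p t) = ⟪w, ∑ t, f t⟫ := by
    simp only [inner_sum, f, real_inner_smul_right, mul_comm]
  have hnorm : ∀ t, ‖f t‖ ^ 2 = ‖Φ (x t) (p t)‖ ^ 2 * (y t - p t) ^ 2 := fun t => by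
    rw [norm_smul, mul_pow, Real.norm_eq_abs, sq_abs, mul_comm]
  have hcross : ∀ t ∈ Finset.univ, ⟪f t, ∑ i ∈ Finset.univ with i < t, f i⟫ ≤ 0 := fun t _ => by
    rw [filter_gt_eq_Iio, real_inner_smul_left]
    exact hinv t (y t) (hy t)
  have hbound : ‖∑ t, f t‖ ≤ Real.sqrt (∑ t, ‖Φ (x t) (p t)‖ ^ 2 * (y t - p t) ^ 2) := by
    rw [Real.le_sqrt (norm_nonneg _) (sum_nonneg fun t _ => by positivity)]
    simpa only [hnorm] using norm_sum_sq_le_sum_norm_sq_of_inner_partialSum_nonpos f univ hcross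
  rw [hsum]
  exact (abs_real_inner_le_norm w _).trans (mul_le_mul_of_nonneg_left hbound (norm_nonneg w))

/-- **Guarantee of the K29 algorithm (Proposition A.1, feature-map form).**
Let `H` be a real Hilbert space and `Φ : X × [0,1] → H` any feature map. If a transcript
`(x_t, p_t, y_t)` with `p_t, y_t ∈ [0,1]` satisfies the K29 invariant
(for every `t` and every `y ∈ [0,1]`,
`(y − p_t) * ⟪Φ(x_t,p_t), ∑_{i<t} (y_i − p_i) • Φ(x_i,p_i)⟫ ≤ 0`),
then for every `w ∈ H`,
`|∑_t ⟪w, Φ(x_t,p_t)⟫ (y_t − p_t)| ≤ ‖w‖ * √(∑_t ‖Φ(x_t,p_t)‖² (y_t − p_t)²)`. -/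
theorem k29_guarantee
    {X : Type*} {H : Type*} [NormedAddCommGroup H] [InnerProductSpace ℝ H] [CompleteSpace H]
    (Φ : X → ℝ → H) (T : ℕ) (x : Fin T → X) (p y : Fin T → ℝ)
    (hp : ∀ t, p t ∈ Icc (0:ℝ) 1) (hy : ∀ t, y t ∈ Icc (0:ℝ) 1)
    (hinv : ∀ t : Fin T, ∀ y' ∈ Icc (0:ℝ) 1,
      (y' - p t) *
        ⟪Φ (x t) (p t), ∑ i ∈ Finset.Iio t, (y i - p i) • Φ (x i) (p i)⟫ ≤ 0) :
    ∀ w : H,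
      |∑ t, ⟪w, Φ (x t) (p t)⟫ * (y t - p t)| ≤
        ‖w‖ * Real.sqrt (∑ t, ‖Φ (x t) (p t)‖ ^ 2 * (y t - p t) ^ 2) :=
  k29_guarantee_general Φ T x p y hy hinv
end

section
/- Existence of a defensive prediction for one round of K29: Let S : [0,1] → ℝ be a continuous function. Then there exists p ∈ [0,1] such that (y − p)·S(p) ≤ 0 for every y ∈ [0,1]. (If S(1) ≥ 0 one may take p = 1; if S(0) ≤ 0 one may take p = 0; otherwise a root of S works.) -/
open Set

/-- **Existence of a defensive prediction for one round of K29.**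
Let `S : [0,1] → ℝ` be continuous. Then there exists `p ∈ [0,1]` such that
`(y − p) * S p ≤ 0` for every `y ∈ [0,1]`. -/
theorem exists_defensive_prediction (S : ℝ → ℝ) (hS : ContinuousOn S (Icc (0:ℝ) 1)) :
    ∃ p ∈ Icc (0:ℝ) 1, ∀ y ∈ Icc (0:ℝ) 1, (y - p) * S p ≤ 0 := by
  by_cases h1 : 0 ≤ S 1
  · exact ⟨1, ⟨zero_le_one, le_refl 1⟩, fun y hy =>
      mul_nonpos_of_nonpos_of_nonneg (by linarith [hy.2]) h1⟩
  by_cases h0 : S 0 ≤ 0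
  · exact ⟨0, ⟨le_refl 0, zero_le_one⟩, fun y hy =>
      mul_nonpos_of_nonneg_of_nonpos (by linarith [hy.1]) h0⟩
  · push_neg at h1 h0
    obtain ⟨p, hp, hroot⟩ := intermediate_value_Icc' zero_le_one hS
      (show S 1 ≤ 0 ∧ 0 ≤ S 0 from ⟨h1.le, h0.le⟩ : (0:ℝ) ∈ Icc (S 1) (S 0))
    exact ⟨p, hp, fun y hy => by rw [hroot, mul_zero]⟩
end

section
/- Corollary 3.2(a), regret part: Let C be a finite set of functions c : X × [0,1] → [−1,1] and let Φ : X × [0,1] → ℝ^C be the feature map Φ(x,p) = (c(x,p))_{c∈C}. If a transcript (x_1,p_1,y_1),…,(x_T,p_T,y_T) with all p_t, y_t ∈ [0,1] satisfies the K29 invariant for Φ (for every t and every y ∈ [0,1], (y − p_t)·⟨Φ(x_t,p_t), Σ_{i=1}^{t−1}(y_i − p_i)Φ(x_i,p_i)⟩ ≤ 0), then for every c ∈ C: |Σ_{t=1}^T c(x_t,p_t)(y_t − p_t)| ≤ √(|C| · T). -/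
/-!
Put `v t := (y_t - p_t) • Φ(x_t, p_t)`. Taking `y = y_t` in the K29 invariant says that each
`v t` makes a non-positive inner product with the partial sum `∑_{i<t} v i`, so the squared
norm of the partial sums grows by at most `‖v t‖² ≤ |C|` per step and `‖∑_t v t‖² ≤ |C| T`.
The regret of `c` is the `c`-coordinate of `∑_t v t`, hence at most its norm.
-/

open Finset Set
open scoped RealInnerProductSpace

theorem norm_sq_sum_le_card_mul_of_inner_partialSum_nonpos {ι E : Type*} [LinearOrder ι]
    [NormedAddCommGroup E] [InnerProductSpace ℝ E] (s : Finset ι) (f : ι → E) {B : ℝ}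
    (hB : ∀ i ∈ s, ‖f i‖ ^ 2 ≤ B) (hf : ∀ i ∈ s, ⟪f i, ∑ j ∈ s with j < i, f j⟫ ≤ 0) :
    ‖∑ i ∈ s, f i‖ ^ 2 ≤ #s * B := by
  induction s using Finset.induction_on_max with
  | empty => simp
  | insert a s ha ih =>
    have ha' : a ∉ s := fun h => lt_irrefl a (ha a h)
    have hprefix : ({j ∈ insert a s | j < a} : Finset ι) = s := by
      ext j
      simp only [mem_filter, Finset.mem_insert]
      exact ⟨fun ⟨h, hj⟩ => h.resolve_left hj.ne, fun hj => ⟨Or.inr hj, ha j hj⟩⟩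
    have hs : ‖∑ i ∈ s, f i‖ ^ 2 ≤ #s * B := by
      refine ih (fun i hi => hB i (mem_insert_of_mem hi)) fun i hi => ?_
      have hfilter : ({j ∈ insert a s | j < i} : Finset ι) = {j ∈ s | j < i} := by
        rw [filter_insert, if_neg (ha i hi).not_gt]
      simpa only [hfilter] using hf i (mem_insert_of_mem hi)
    have hinner := hf a (mem_insert_self a s)
    rw [hprefix] at hinner
    rw [sum_insert ha', card_insert_of_notMem ha', norm_add_sq_real]
    push_cast
    linarith [hB a (mem_insert_self a s)]

theorem EuclideanSpace.norm_sq_le_card_of_abs_le_one {ι : Type*} [Fintype ι]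
    (v : EuclideanSpace ℝ ι) (hv : ∀ i, |v i| ≤ 1) : ‖v‖ ^ 2 ≤ Fintype.card ι := by
  rw [EuclideanSpace.real_norm_sq_eq]
  calc ∑ i, v i ^ 2 ≤ ∑ _i : ι, (1 : ℝ) :=
        sum_le_sum fun i _ => (sq_le_one_iff_abs_le_one _).mpr (hv i)
    _ = Fintype.card ι := by simp

/-- **Corollary 3.2(a), regret part.**
Let `C` be a finite set of functions `c : X × [0,1] → [−1,1]` and let
`Φ : X × [0,1] → ℝ^C` be the feature map `Φ (x, p) = (c (x, p))_{c ∈ C}` (into Euclidean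
space indexed by `C`). If a transcript `(x_t, p_t, y_t)` with `p_t, y_t ∈ [0,1]` satisfies
the K29 invariant for `Φ`, then for every `c ∈ C`,
`|∑_t c (x_t, p_t) (y_t − p_t)| ≤ √(|C| · T)`. -/
theorem k29_finite_collection_regret
    {X : Type*} (C : Finset (X → ℝ → ℝ))
    (hC_bdd : ∀ c ∈ C, ∀ x : X, ∀ p ∈ Icc (0:ℝ) 1, c x p ∈ Icc (-1:ℝ) 1)
    (Φ : X → ℝ → EuclideanSpace ℝ C)
    (hΦ : ∀ (x : X) (p : ℝ) (c : C), Φ x p c = (c : X → ℝ → ℝ) x p)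
    (T : ℕ) (x : Fin T → X) (p y : Fin T → ℝ)
    (hp : ∀ t, p t ∈ Icc (0:ℝ) 1) (hy : ∀ t, y t ∈ Icc (0:ℝ) 1)
    (hinv : ∀ t : Fin T, ∀ y' ∈ Icc (0:ℝ) 1,
      (y' - p t) *
        ⟪Φ (x t) (p t), ∑ i ∈ Finset.Iio t, (y i - p i) • Φ (x i) (p i)⟫ ≤ 0) :
    ∀ c ∈ C,
      |∑ t, c (x t) (p t) * (y t - p t)| ≤ Real.sqrt ((C.card : ℝ) * T) := by
  intro c hc
  set v : Fin T → EuclideanSpace ℝ C := fun t => (y t - p t) • Φ (x t) (p t)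
  have hv_norm : ∀ t ∈ Finset.univ, ‖v t‖ ^ 2 ≤ #C := by
    intro t _
    obtain ⟨hp₀, hp₁⟩ := hp t
    obtain ⟨hy₀, hy₁⟩ := hy t
    have hΦ_norm : ‖Φ (x t) (p t)‖ ^ 2 ≤ #C :=
      Fintype.card_coe C ▸ EuclideanSpace.norm_sq_le_card_of_abs_le_one _ fun c' =>
        abs_le.mpr (hΦ (x t) (p t) c' ▸ hC_bdd c' c'.2 (x t) (p t) (hp t))
    have hyp : |y t - p t| ^ 2 ≤ 1 := by
      rw [sq_abs, sq_le_one_iff_abs_le_one, abs_le]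
      constructor <;> linarith
    rw [norm_smul, mul_pow, Real.norm_eq_abs]
    exact (mul_le_of_le_one_left (by positivity) hyp).trans hΦ_norm
  have hv_inner : ∀ t ∈ Finset.univ, ⟪v t, ∑ i ∈ univ with i < t, v i⟫ ≤ 0 := by
    intro t _
    rw [filter_gt_eq_Iio, real_inner_smul_left]
    exact hinv t (y t) (hy t)
  have hsum := norm_sq_sum_le_card_mul_of_inner_partialSum_nonpos univ v hv_norm hv_inner
  have hcoord : (∑ t, v t) ⟨c, hc⟩ = ∑ t, c (x t) (p t) * (y t - p t) := by
    simp [v, hΦ, mul_comm]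
  rw [← hcoord]
  calc |(∑ t, v t) ⟨c, hc⟩| ≤ ‖∑ t, v t‖ := by
        simpa using PiLp.norm_apply_le (∑ t, v t) ⟨c, hc⟩
    _ ≤ Real.sqrt (#C * T) := Real.le_sqrt_of_sq_le (by simpa [mul_comm] using hsum)
end

section
/- Corollary 3.2(b), regret part: Let X = {x ∈ ℝ^d : ‖x‖₂ ≤ 1} and let Φ : X × [0,1] → ℝ^{d+1} be the feature map Φ(x,p) = (x, p). If a transcript (x_1,p_1,y_1),…,(x_T,p_T,y_T) with all p_t, y_t ∈ [0,1] satisfies the K29 invariant for Φ (for every t and every y ∈ [0,1], (y − p_t)·⟨Φ(x_t,p_t), Σ_{i=1}^{t−1}(y_i − p_i)Φ(x_i,p_i)⟩ ≤ 0), then for every θ ∈ ℝ^d with ‖θ‖₂ ≤ 1: |Σ_{t=1}^T (⟨θ, x_t⟩ + p_t)(y_t − p_t)| ≤ 2√T. -/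
open Finset Set
open scoped RealInnerProductSpace

/-! The K29 invariant says that each increment `(y_t - p_t) Φ_t` is non-positively correlated
with the running sum `S_{t-1}` of the previous ones, so `‖S_t‖² ≤ ‖S_{t-1}‖² + ‖(y_t - p_t) Φ_t‖²`
and `‖S_T‖² ≤ 2T`, since features have squared norm at most `2`. The regret against `θ` is
`⟪(θ, 1), S_T⟫`, and `‖(θ, 1)‖² ≤ 2`, so Cauchy–Schwarz gives `√2 · √(2T) = 2√T`. -/

theorem norm_sq_sum_le_of_inner_sum_lt_nonpos {E ι : Type*} [NormedAddCommGroup E]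
    [InnerProductSpace ℝ E] [LinearOrder ι] (u : ι → E) (C : ℝ) (s : Finset ι)
    (hcorr : ∀ t ∈ s, ⟪u t, ∑ i ∈ s with i < t, u i⟫ ≤ 0)
    (hu : ∀ t ∈ s, ‖u t‖ ^ 2 ≤ C) :
    ‖∑ t ∈ s, u t‖ ^ 2 ≤ #s * C := by
  induction s using Finset.induction_on_max with
  | empty => simp
  | insert a s ha ih =>
    have ha_notMem : a ∉ s := fun h => lt_irrefl a (ha a h)
    have hprefix : ∀ t ∈ s, (insert a s).filter (· < t) = s.filter (· < t) := by
      intro t ht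
      rw [filter_insert, if_neg (ha t ht).not_gt]
    have hprefix_a : (insert a s).filter (· < a) = s := by
      rw [filter_insert, if_neg (lt_irrefl a), filter_true_of_mem ha]
    have hS : ‖∑ t ∈ s, u t‖ ^ 2 ≤ #s * C :=
      ih (fun t ht => hprefix t ht ▸ hcorr t (mem_insert_of_mem ht))
        (fun t ht => hu t (mem_insert_of_mem ht))
    have hnew : ⟪u a, ∑ t ∈ s, u t⟫ ≤ 0 := hprefix_a ▸ hcorr a (mem_insert_self a s)
    rw [sum_insert ha_notMem, card_insert_of_notMem ha_notMem, norm_add_sq_real]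
    push_cast
    linarith [hu a (mem_insert_self a s)]

section ProdL2

variable {E : Type*} [NormedAddCommGroup E]

theorem WithLp.norm_toLp_prod_sq (x : E) (r : ℝ) :
    ‖WithLp.toLp 2 (x, r)‖ ^ 2 = ‖x‖ ^ 2 + r ^ 2 := by
  rw [WithLp.prod_norm_sq_eq_of_L2, Real.norm_eq_abs, sq_abs]
  rfl

theorem WithLp.norm_toLp_prod_sq_le_two {x : E} {r : ℝ} (hx : ‖x‖ ≤ 1) (hr : |r| ≤ 1) :
    ‖WithLp.toLp 2 (x, r)‖ ^ 2 ≤ 2 := by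
  rw [WithLp.norm_toLp_prod_sq, ← sq_abs r]
  nlinarith [norm_nonneg x, abs_nonneg r]

theorem WithLp.norm_smul_toLp_prod_sq_le_two [NormedSpace ℝ E] {x : E} {r c : ℝ} (hx : ‖x‖ ≤ 1) (hr : |r| ≤ 1)
    (hc : |c| ≤ 1) : ‖c • WithLp.toLp 2 (x, r)‖ ^ 2 ≤ 2 :=
  calc ‖c • WithLp.toLp 2 (x, r)‖ ^ 2 = |c| ^ 2 * ‖WithLp.toLp 2 (x, r)‖ ^ 2 := by
        rw [norm_smul, mul_pow, Real.norm_eq_abs]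
    _ ≤ 1 ^ 2 * 2 := by
        gcongr
        exact WithLp.norm_toLp_prod_sq_le_two hx hr
    _ = 2 := by norm_num

theorem WithLp.inner_toLp_prod [InnerProductSpace ℝ E] (x x' : E) (r r' : ℝ) :
    ⟪WithLp.toLp 2 (x, r), WithLp.toLp 2 (x', r')⟫ = ⟪x, x'⟫ + r * r' := by
  rw [WithLp.prod_inner_apply, real_inner_eq_re_inner, RCLike.inner_apply, conj_trivial]
  simp only [RCLike.re_to_real]
  ring

end ProdL2

theorem abs_sub_le_one_of_mem_Icc {a b : ℝ} (ha : a ∈ Icc (0 : ℝ) 1) (hb : b ∈ Icc (0 : ℝ) 1) :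
    |a - b| ≤ 1 :=
  abs_sub_le_iff.2 ⟨by linarith [ha.2, hb.1], by linarith [ha.1, hb.2]⟩

theorem abs_inner_le_two_mul_sqrt {E : Type*} [NormedAddCommGroup E] [InnerProductSpace ℝ E]
    {v w : E} {n : ℝ} (hv : ‖v‖ ^ 2 ≤ 2) (hw : ‖w‖ ^ 2 ≤ n * 2) :
    |⟪v, w⟫| ≤ 2 * Real.sqrt n := by
  have hn : 0 ≤ n := by nlinarith [sq_nonneg ‖w‖]
  calc |⟪v, w⟫| ≤ ‖v‖ * ‖w‖ := abs_real_inner_le_norm v w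
    _ = Real.sqrt (‖v‖ ^ 2 * ‖w‖ ^ 2) := by
        rw [← mul_pow, Real.sqrt_sq (by positivity)]
    _ ≤ Real.sqrt (2 * (n * 2)) := by gcongr
    _ = 2 * Real.sqrt n := by
        rw [show (2 : ℝ) * (n * 2) = 2 ^ 2 * n by ring, Real.sqrt_mul (by positivity),
          Real.sqrt_sq zero_le_two]

/-- **Corollary 3.2(b), regret part.**
Let `X = {x ∈ ℝ^d : ‖x‖₂ ≤ 1}` and let `Φ : X × [0,1] → ℝ^{d+1}` be the feature map
`Φ (x, p) = (x, p)` (into `ℝ^d × ℝ` with the product inner product, i.e. `WithLp 2`).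
If a transcript `(x_t, p_t, y_t)` with `p_t, y_t ∈ [0,1]` satisfies the K29 invariant
for `Φ`, then for every `θ ∈ ℝ^d` with `‖θ‖₂ ≤ 1`,
`|∑_t (⟪θ, x_t⟫ + p_t) (y_t − p_t)| ≤ 2 √T`. -/
theorem k29_linear_regret (d : ℕ)
    (Φ : EuclideanSpace ℝ (Fin d) → ℝ → WithLp 2 (EuclideanSpace ℝ (Fin d) × ℝ))
    (hΦ : ∀ (x : EuclideanSpace ℝ (Fin d)) (p : ℝ),
      Φ x p = (WithLp.equiv 2 (EuclideanSpace ℝ (Fin d) × ℝ)).symm (x, p))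
    (T : ℕ) (x : Fin T → EuclideanSpace ℝ (Fin d)) (hx : ∀ t, ‖x t‖ ≤ 1)
    (p y : Fin T → ℝ)
    (hp : ∀ t, p t ∈ Icc (0:ℝ) 1) (hy : ∀ t, y t ∈ Icc (0:ℝ) 1)
    (hinv : ∀ t : Fin T, ∀ y' ∈ Icc (0:ℝ) 1,
      (y' - p t) *
        ⟪Φ (x t) (p t), ∑ i ∈ Finset.Iio t, (y i - p i) • Φ (x i) (p i)⟫ ≤ 0) :
    ∀ θ : EuclideanSpace ℝ (Fin d), ‖θ‖ ≤ 1 →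
      |∑ t, (⟪θ, x t⟫ + p t) * (y t - p t)| ≤ 2 * Real.sqrt T := by
  intro θ hθ
  simp only [hΦ, WithLp.equiv_symm_apply] at hinv
  set u : Fin T → WithLp 2 (EuclideanSpace ℝ (Fin d) × ℝ) :=
    fun t => (y t - p t) • WithLp.toLp 2 (x t, p t)
  have hsum : ‖∑ t, u t‖ ^ 2 ≤ T * 2 := by
    simpa using norm_sq_sum_le_of_inner_sum_lt_nonpos u 2 univ
      (fun t _ => by
        rw [filter_gt_eq_Iio, real_inner_smul_left]
        exact hinv t (y t) (hy t))
      (fun t _ => WithLp.norm_smul_toLp_prod_sq_le_two (hx t)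
        (abs_le.2 ⟨by linarith [(hp t).1], (hp t).2⟩) (abs_sub_le_one_of_mem_Icc (hy t) (hp t)))
  have hregret : ∑ t, (⟪θ, x t⟫ + p t) * (y t - p t) = ⟪WithLp.toLp 2 (θ, 1), ∑ t, u t⟫ := by
    simp only [u, inner_sum, real_inner_smul_right, WithLp.inner_toLp_prod, mul_one, mul_comm]
  rw [hregret]
  exact abs_inner_le_two_mul_sqrt
    (WithLp.norm_toLp_prod_sq_le_two hθ (by norm_num)) hsum
end

section
/- Lemma 4.2 (loss outcome indistinguishability implies performative stability): Assume binary outcomes with conditional mean q, let ℓ be a proper scoring rule, let f be a randomized predictor, let H be a class of measurable functions h : X → [0,1], and let ε > 0. Suppose (i) E_{x~D_x, p~f(x)}[q(x,p)·ℓ(p,1) + (1−q(x,p))·ℓ(p,0)] ≤ E_{x~D_x, p~f(x)}[p·ℓ(p,1) + (1−p)·ℓ(p,0)] + ε, and (ii) for every h ∈ H: E_{x~D_x, p~f(x)}[p·ℓ(h(x),1) + (1−p)·ℓ(h(x),0)] ≤ E_{x~D_x, p~f(x)}[q(x,p)·ℓ(h(x),1) + (1−q(x,p))·ℓ(h(x),0)]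 + ε. Then f is 2ε-performatively stable with respect to H: for every h ∈ H, E_{(x,p,y)~D(f)} ℓ(p,y) ≤ E_{(x,p,y)~D(f)} ℓ(h(x),y) + 2ε. -/
open MeasureTheory ProbabilityTheory Set
open scoped ProbabilityTheory

/-- **Lemma 4.2 (loss outcome indistinguishability implies performative stability).**
Outcomes are binary, sampled as `y ~ Ber (q x p)` after `x ~ Dx` and `p ~ f x`.
If the two loss outcome-indistinguishability conditions hold for a proper scoring rule `ℓ`,
then `f` is `2ε`-performatively stable w.r.t. the benchmark class `H`: for every `h ∈ H`,
`E_{(x,p,y) ~ D(f)} ℓ(p,y) ≤ E_{(x,p,y) ~ D(f)} ℓ(h x, y) + 2ε`.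
(Expectations over the binary outcome are written out via the conditional mean `q`.) -/
theorem loss_oi_implies_performative_stability
    {X : Type*} [MeasurableSpace X]
    (Dx : Measure X) [IsProbabilityMeasure Dx]
    (f : Kernel X ℝ) [IsMarkovKernel f] (hf : ∀ x, f x (Icc (0:ℝ) 1) = 1)
    (q : X → ℝ → ℝ) (hq_meas : Measurable (Function.uncurry q))
    (hq : ∀ x p, q x p ∈ Icc (0:ℝ) 1)
    (ℓ : ℝ → ℝ → ℝ)
    (hℓ_proper : ∀ p ∈ Icc (0:ℝ) 1, ∀ v ∈ Icc (0:ℝ) 1,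
      p * ℓ p 1 + (1 - p) * ℓ p 0 ≤ p * ℓ v 1 + (1 - p) * ℓ v 0)
    (H : Set (X → ℝ))
    (hH : ∀ h ∈ H, Measurable h ∧ ∀ x, h x ∈ Icc (0:ℝ) 1)
    (hℓ_int1 : Integrable (fun z : X × ℝ => ℓ z.2 1) (Dx ⊗ₘ f))
    (hℓ_int0 : Integrable (fun z : X × ℝ => ℓ z.2 0) (Dx ⊗ₘ f))
    (hℓ_intH : ∀ h ∈ H, Integrable (fun z : X × ℝ => ℓ (h z.1) 1) (Dx ⊗ₘ f) ∧
      Integrable (fun z : X × ℝ => ℓ (h z.1) 0) (Dx ⊗ₘ f))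
    (ε : ℝ) (hε : 0 < ε)
    (hOI₁ : ∫ x, ∫ p, (q x p * ℓ p 1 + (1 - q x p) * ℓ p 0) ∂(f x) ∂Dx ≤
      (∫ x, ∫ p, (p * ℓ p 1 + (1 - p) * ℓ p 0) ∂(f x) ∂Dx) + ε)
    (hOI₂ : ∀ h ∈ H,
      ∫ x, ∫ p, (p * ℓ (h x) 1 + (1 - p) * ℓ (h x) 0) ∂(f x) ∂Dx ≤
        (∫ x, ∫ p, (q x p * ℓ (h x) 1 + (1 - q x p) * ℓ (h x) 0) ∂(f x) ∂Dx) + ε) :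
    ∀ h ∈ H,
      ∫ x, ∫ p, (q x p * ℓ p 1 + (1 - q x p) * ℓ p 0) ∂(f x) ∂Dx ≤
        (∫ x, ∫ p, (q x p * ℓ (h x) 1 + (1 - q x p) * ℓ (h x) 0) ∂(f x) ∂Dx) + 2 * ε := by
  intro h hh
  set μ := Dx ⊗ₘ f with hμ
  -- a.e. z, z.2 ∈ [0,1]
  have hae : ∀ᵐ z ∂μ, z.2 ∈ Icc (0:ℝ) 1 := by
    rw [Measure.ae_compProd_iff (measurable_snd measurableSet_Icc)]
    refine ae_of_all _ fun x => ?_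
    have : (f x) (Icc (0:ℝ) 1)ᶜ = 0 := by
      have := IsMarkovKernel.isProbabilityMeasure (κ := f) x
      rw [measure_compl measurableSet_Icc (measure_ne_top _ _), hf x, measure_univ]
      simp
    exact ae_iff.2 this
  have hbd : ∀ᵐ z ∂μ, |z.2| ≤ 1 ∧ |1 - z.2| ≤ 1 := by
    filter_upwards [hae] with z hz
    constructor <;> rw [abs_le] <;> constructor <;> linarith [hz.1, hz.2]
  -- integrability of the two middle integrands
  have key_int : ∀ (g : X × ℝ → ℝ), AEStronglyMeasurable g μ →
      Integrable (fun z : X × ℝ => z.2 * g z) μ →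
      Integrable g μ → True := fun _ _ _ _ => trivial
  have mk_int : ∀ (g1 g0 : X × ℝ → ℝ), Integrable g1 μ → Integrable g0 μ →
      Integrable (fun z : X × ℝ => z.2 * g1 z + (1 - z.2) * g0 z) μ := by
    intro g1 g0 h1 h0
    refine Integrable.mono' (h1.abs.add h0.abs) ?_ ?_
    · exact ((measurable_snd.aemeasurable.aestronglyMeasurable.mul h1.1).add
        (((aestronglyMeasurable_const.sub measurable_snd.aemeasurable.aestronglyMeasurable)).mul h0.1))
    · filter_upwards [hbd] with z hz
      calc ‖z.2 * g1 z + (1 - z.2) * g0 z‖ ≤ ‖z.2 * g1 z‖ + ‖(1 - z.2) * g0 z‖ := norm_add_le _ _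
        _ ≤ |g1 z| + |g0 z| := by
            rw [norm_mul, norm_mul, Real.norm_eq_abs, Real.norm_eq_abs,
              Real.norm_eq_abs, Real.norm_eq_abs]
            have := abs_nonneg (g1 z); have := abs_nonneg (g0 z)
            nlinarith [hz.1, hz.2]
  have I1 : Integrable (fun z : X × ℝ => z.2 * ℓ z.2 1 + (1 - z.2) * ℓ z.2 0) μ :=
    mk_int _ _ hℓ_int1 hℓ_int0
  have I2 : Integrable (fun z : X × ℝ => z.2 * ℓ (h z.1) 1 + (1 - z.2) * ℓ (h z.1) 0) μ :=
    mk_int _ _ (hℓ_intH h hh).1 (hℓ_intH h hh).2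
  have e1 : ∫ x, ∫ p, (p * ℓ p 1 + (1 - p) * ℓ p 0) ∂(f x) ∂Dx
      = ∫ z, (z.2 * ℓ z.2 1 + (1 - z.2) * ℓ z.2 0) ∂μ :=
    (Measure.integral_compProd I1).symm
  have e2 : ∫ x, ∫ p, (p * ℓ (h x) 1 + (1 - p) * ℓ (h x) 0) ∂(f x) ∂Dx
      = ∫ z, (z.2 * ℓ (h z.1) 1 + (1 - z.2) * ℓ (h z.1) 0) ∂μ :=
    (Measure.integral_compProd I2).symm
  have mid : ∫ x, ∫ p, (p * ℓ p 1 + (1 - p) * ℓ p 0) ∂(f x) ∂Dx ≤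
      ∫ x, ∫ p, (p * ℓ (h x) 1 + (1 - p) * ℓ (h x) 0) ∂(f x) ∂Dx := by
    rw [e1, e2]
    refine integral_mono_ae I1 I2 ?_
    filter_upwards [hae] with z hz
    exact hℓ_proper z.2 hz (h z.1) ((hH h hh).2 z.1)
  linarith [hOI₂ h hh]
end

section
/- Lemma 4.3 (loss OI for squared loss equals performative multicalibration): Assume binary outcomes with conditional mean q, let ℓ(p,y) = (1/2)(y − p)², let f be a randomized predictor, H a class of measurable functions h : X → [0,1], and ε ≥ 0. Then the following two conditions hold: |E_{x~D_x,p~f(x)}[q(x,p)ℓ(p,1)+(1−q(x,p))ℓ(p,0)] − E_{x~D_x,p~f(x)}[p·ℓ(p,1)+(1−p)·ℓ(p,0)]| ≤ ε, and for every h ∈ H, |E_{x~D_x,p~f(x)}[p·ℓ(h(x),1)+(1−p)·ℓ(h(x),0)] − E_{x~D_x,p~f(x)}[q(x,p)ℓ(h(x),1)+(1−q(x,p))ℓ(h(x),0)]| ≤ ε, if and only if f is ε-performatively multicalibrated with respect to the collection C = {(x,p) ↦ p − 1/2} ∪ {(x,p) ↦ h(x) − 1/2 : h ∈ H}. -/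
open MeasureTheory ProbabilityTheory Set

section Aux

variable {X : Type*} [MeasurableSpace X]

lemma ae_mem_Icc (f : Kernel X ℝ) [IsMarkovKernel f]
    (hf : ∀ x, f x (Icc (0:ℝ) 1) = 1) (x : X) :
    ∀ᵐ p ∂(f x), p ∈ Icc (0:ℝ) 1 := by
  rw [ae_iff]
  have : {p | ¬ p ∈ Icc (0:ℝ) 1} = (Icc (0:ℝ) 1)ᶜ := rfl
  rw [this, prob_compl_eq_zero_iff measurableSet_Icc]
  exact hf x

lemma inner_integrable (f : Kernel X ℝ) [IsMarkovKernel f]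
    (hf : ∀ x, f x (Icc (0:ℝ) 1) = 1)
    (g : X → ℝ → ℝ) (hg : Measurable (Function.uncurry g))
    (hb : ∀ x, ∀ p ∈ Icc (0:ℝ) 1, |g x p| ≤ 1) (x : X) :
    Integrable (g x) (f x) := by
  refine ⟨(hg.of_uncurry_left).aestronglyMeasurable, ?_⟩
  refine HasFiniteIntegral.of_bounded (C := 1) ?_
  filter_upwards [ae_mem_Icc f hf x] with p hp
  simpa [Real.norm_eq_abs] using hb x p hp

lemma inner_bound (f : Kernel X ℝ) [IsMarkovKernel f]
    (hf : ∀ x, f x (Icc (0:ℝ) 1) = 1)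
    (g : X → ℝ → ℝ)
    (hb : ∀ x, ∀ p ∈ Icc (0:ℝ) 1, |g x p| ≤ 1) (x : X) :
    ‖∫ p, g x p ∂(f x)‖ ≤ 1 := by
  have := norm_integral_le_of_norm_le_const (μ := f x) (f := g x) (C := 1) ?_
  · simpa using this
  · filter_upwards [ae_mem_Icc f hf x] with p hp
    simpa [Real.norm_eq_abs] using hb x p hp

lemma outer_integrable (Dx : Measure X) [IsProbabilityMeasure Dx]
    (f : Kernel X ℝ) [IsMarkovKernel f]
    (hf : ∀ x, f x (Icc (0:ℝ) 1) = 1)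
    (g : X → ℝ → ℝ) (hg : Measurable (Function.uncurry g))
    (hb : ∀ x, ∀ p ∈ Icc (0:ℝ) 1, |g x p| ≤ 1) :
    Integrable (fun x => ∫ p, g x p ∂(f x)) Dx := by
  refine ⟨(hg.stronglyMeasurable.integral_kernel_prod_right).aestronglyMeasurable, ?_⟩
  refine HasFiniteIntegral.of_bounded (C := 1) ?_
  exact ae_of_all _ fun x => inner_bound f hf g hb x

/-- Main splitting lemma. -/
lemma double_integral_sub (Dx : Measure X) [IsProbabilityMeasure Dx]
    (f : Kernel X ℝ) [IsMarkovKernel f]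
    (hf : ∀ x, f x (Icc (0:ℝ) 1) = 1)
    (g1 g2 : X → ℝ → ℝ)
    (hg1 : Measurable (Function.uncurry g1)) (hg2 : Measurable (Function.uncurry g2))
    (hb1 : ∀ x, ∀ p ∈ Icc (0:ℝ) 1, |g1 x p| ≤ 1)
    (hb2 : ∀ x, ∀ p ∈ Icc (0:ℝ) 1, |g2 x p| ≤ 1) :
    ∫ x, ∫ p, g1 x p ∂(f x) ∂Dx - ∫ x, ∫ p, g2 x p ∂(f x) ∂Dx
      = ∫ x, ∫ p, (g1 x p - g2 x p) ∂(f x) ∂Dx := by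
  rw [← integral_sub (outer_integrable Dx f hf g1 hg1 hb1)
      (outer_integrable Dx f hf g2 hg2 hb2)]
  refine integral_congr_ae (ae_of_all _ fun x => ?_)
  exact (integral_sub (inner_integrable f hf g1 hg1 hb1 x)
      (inner_integrable f hf g2 hg2 hb2 x)).symm

end Aux

/-- **Lemma 4.3 (loss OI for squared loss equals performative multicalibration).**
Outcomes are binary, sampled as `y ~ Ber (q x p)` after `x ~ Dx` and `p ~ f x`, and
`ℓ (p, y) = (1/2) (y − p)²` is the squared loss. The two loss
outcome-indistinguishability conditions (written out via the conditional mean `q`)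
hold with tolerance `ε` if and only if `f` is `ε`-performatively multicalibrated with
respect to `C = {(x,p) ↦ p − 1/2} ∪ {(x,p) ↦ h x − 1/2 : h ∈ H}` (for binary outcomes,
`E_{(x,p,y) ~ D(f)}[c (x,p) (y − p)] = ∫ x, ∫ p, c x p * (q x p − p)`). -/
theorem loss_oi_iff_performative_multicalibration
    {X : Type*} [MeasurableSpace X]
    (Dx : Measure X) [IsProbabilityMeasure Dx]
    (f : Kernel X ℝ) [IsMarkovKernel f] (hf : ∀ x, f x (Icc (0:ℝ) 1) = 1)
    (q : X → ℝ → ℝ) (hq_meas : Measurable (Function.uncurry q))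
    (hq : ∀ x p, q x p ∈ Icc (0:ℝ) 1)
    (ℓ : ℝ → ℝ → ℝ) (hℓ : ∀ p y, ℓ p y = 1 / 2 * (y - p) ^ 2)
    (H : Set (X → ℝ))
    (hH : ∀ h ∈ H, Measurable h ∧ ∀ x, h x ∈ Icc (0:ℝ) 1)
    (ε : ℝ) (hε : 0 ≤ ε) :
    (|∫ x, ∫ p, (q x p * ℓ p 1 + (1 - q x p) * ℓ p 0) ∂(f x) ∂Dx -
        ∫ x, ∫ p, (p * ℓ p 1 + (1 - p) * ℓ p 0) ∂(f x) ∂Dx| ≤ ε ∧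
      ∀ h ∈ H,
        |(∫ x, ∫ p, (p * ℓ (h x) 1 + (1 - p) * ℓ (h x) 0) ∂(f x) ∂Dx) -
          ∫ x, ∫ p, (q x p * ℓ (h x) 1 + (1 - q x p) * ℓ (h x) 0) ∂(f x) ∂Dx| ≤ ε)
    ↔
    (|∫ x, ∫ p, (p - 1 / 2) * (q x p - p) ∂(f x) ∂Dx| ≤ ε ∧
      ∀ h ∈ H, |∫ x, ∫ p, (h x - 1 / 2) * (q x p - p) ∂(f x) ∂Dx| ≤ ε) := by
  have hℓmeas1 : Measurable fun p : ℝ => ℓ p 1 := by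
    simp_rw [hℓ]; fun_prop
  have hℓmeas0 : Measurable fun p : ℝ => ℓ p 0 := by
    simp_rw [hℓ]; fun_prop
  have hℓb : ∀ p ∈ Icc (0:ℝ) 1, ∀ y ∈ Icc (0:ℝ) 1, |ℓ p y| ≤ 1 / 2 := by
    intro p hp y hy
    rw [hℓ, abs_mul, abs_of_nonneg (by norm_num : (0:ℝ) ≤ 1/2),
      abs_of_nonneg (sq_nonneg _)]
    nlinarith [hp.1, hp.2, hy.1, hy.2]
  -- bound for convex combinations
  have combo_bound : ∀ a b c : ℝ, a ∈ Icc (0:ℝ) 1 → |b| ≤ 1/2 → |c| ≤ 1/2 →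
      |a * b + (1 - a) * c| ≤ 1 := by
    intro a b c ha hb hc
    calc |a * b + (1 - a) * c| ≤ |a * b| + |(1 - a) * c| := abs_add_le _ _
      _ = |a| * |b| + |1 - a| * |c| := by rw [abs_mul, abs_mul]
      _ ≤ 1 * (1/2) + 1 * (1/2) := by
          have h1 : |a| ≤ 1 := by rw [abs_le]; exact ⟨by linarith [ha.1], ha.2⟩
          have h2 : |1 - a| ≤ 1 := by rw [abs_le]; constructor <;> [linarith [ha.2]; linarith [ha.1]]
          gcongr <;> positivity
      _ = 1 := by norm_num
  -- First equivalence
  have E1 : ∫ x, ∫ p, (q x p * ℓ p 1 + (1 - q x p) * ℓ p 0) ∂(f x) ∂Dx -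
        ∫ x, ∫ p, (p * ℓ p 1 + (1 - p) * ℓ p 0) ∂(f x) ∂Dx
      = - ∫ x, ∫ p, (p - 1 / 2) * (q x p - p) ∂(f x) ∂Dx := by
    rw [double_integral_sub Dx f hf _ _ ?_ ?_ ?_ ?_]
    · rw [← integral_neg]
      refine integral_congr_ae (ae_of_all _ fun x => ?_)
      dsimp only
      rw [← integral_neg]
      refine integral_congr_ae (ae_of_all _ fun p => ?_)
      simp only [hℓ]; ring
    · exact ((hq_meas.mul (hℓmeas1.comp measurable_snd)).add
        ((measurable_const.sub hq_meas).mul (hℓmeas0.comp measurable_snd)))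
    · fun_prop
    · intro x p hp
      exact combo_bound _ _ _ (hq x p) (hℓb p hp 1 (by norm_num)) (hℓb p hp 0 (by norm_num))
    · intro x p hp
      exact combo_bound _ _ _ hp (hℓb p hp 1 (by norm_num)) (hℓb p hp 0 (by norm_num))
  -- Second equivalence, per h
  have E2 : ∀ h ∈ H,
      (∫ x, ∫ p, (p * ℓ (h x) 1 + (1 - p) * ℓ (h x) 0) ∂(f x) ∂Dx) -
        ∫ x, ∫ p, (q x p * ℓ (h x) 1 + (1 - q x p) * ℓ (h x) 0) ∂(f x) ∂Dx
      = ∫ x, ∫ p, (h x - 1 / 2) * (q x p - p) ∂(f x) ∂Dx := by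
    intro h hh
    obtain ⟨hhm, hhb⟩ := hH h hh
    rw [double_integral_sub Dx f hf _ _ ?_ ?_ ?_ ?_]
    · refine integral_congr_ae (ae_of_all _ fun x => ?_)
      refine integral_congr_ae (ae_of_all _ fun p => ?_)
      simp only [hℓ]; ring
    · exact (measurable_snd.mul ((hℓmeas1.comp hhm).comp measurable_fst)).add
        ((measurable_const.sub measurable_snd).mul ((hℓmeas0.comp hhm).comp measurable_fst))
    · exact (hq_meas.mul ((hℓmeas1.comp hhm).comp measurable_fst)).add
        ((measurable_const.sub hq_meas).mul ((hℓmeas0.comp hhm).comp measurable_fst))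
    · intro x p hp
      exact combo_bound _ _ _ hp (hℓb (h x) (hhb x) 1 (by norm_num))
        (hℓb (h x) (hhb x) 0 (by norm_num))
    · intro x p hp
      exact combo_bound _ _ _ (hq x p) (hℓb (h x) (hhb x) 1 (by norm_num))
        (hℓb (h x) (hhb x) 0 (by norm_num))
  constructor
  · rintro ⟨h1, h2⟩
    refine ⟨?_, fun h hh => ?_⟩
    · rw [E1, abs_neg] at h1; exact h1
    · rw [← E2 h hh]; exact h2 h hh
  · rintro ⟨h1, h2⟩
    refine ⟨?_, fun h hh => ?_⟩
    · rw [E1, abs_neg]; exact h1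
    · rw [E2 h hh]; exact h2 h hh
end

section
/- Theorem 4.1 (performative multicalibration implies performative stability): Assume binary outcomes with conditional mean q, let ℓ(p,y) = (1/2)(y − p)² be the squared loss, and let H be a class of measurable functions h : X → [0,1]. If a randomized predictor f is ε-performatively multicalibrated with respect to the collection C = {(x,p) ↦ p − 1/2} ∪ {(x,p) ↦ h(x) − 1/2 : h ∈ H}, then f is 2ε-performatively stable with respect to H: for every h ∈ H, E_{(x,p,y)~D(f)} (1/2)(y − p)² ≤ E_{(x,p,y)~D(f)} (1/2)(y − h(x))² + 2ε. -/
open MeasureTheory ProbabilityTheory Set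

lemma my_aux {X : Type*} [MeasurableSpace X]
    (Dx : Measure X) [IsProbabilityMeasure Dx]
    (f : Kernel X ℝ) [IsMarkovKernel f] (hf : ∀ x, f x (Icc (0:ℝ) 1) = 1)
    (g : X → ℝ → ℝ) (hg : Measurable (Function.uncurry g)) (C : ℝ)
    (hC : ∀ x p, p ∈ Icc (0:ℝ) 1 → |g x p| ≤ C) :
    (∀ x, Integrable (g x) (f x)) ∧
      Integrable (fun x => ∫ p, g x p ∂(f x)) Dx := by
  have hae : ∀ x, ∀ᵐ p ∂(f x), p ∈ Icc (0:ℝ) 1 := by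
    intro x
    have hcompl : f x (Icc (0:ℝ) 1)ᶜ = 0 := by
      have h1 : f x (Icc (0:ℝ) 1)ᶜ = f x univ - f x (Icc (0:ℝ) 1) :=
        measure_compl measurableSet_Icc (measure_ne_top _ _)
      rw [hf x] at h1; simpa using h1
    exact (ae_iff).2 (by simpa [Set.compl_def] using hcompl)
  have hmeas : ∀ x, Measurable (g x) := fun x =>
    hg.comp (measurable_prodMk_left)
  have hint : ∀ x, Integrable (g x) (f x) := by
    intro x
    refine ⟨(hmeas x).aestronglyMeasurable, HasFiniteIntegral.of_bounded (C := C) ?_⟩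
    filter_upwards [hae x] with p hp
    simpa [Real.norm_eq_abs] using hC x p hp
  refine ⟨hint, ?_⟩
  refine ⟨(StronglyMeasurable.integral_kernel_prod_right
      (κ := f) hg.stronglyMeasurable).aestronglyMeasurable,
    HasFiniteIntegral.of_bounded (C := C) (ae_of_all _ fun x => ?_)⟩
  calc ‖∫ p, g x p ∂(f x)‖ ≤ C * ((f x) univ).toReal := by
        refine norm_integral_le_of_norm_le_const ?_
        filter_upwards [hae x] with p hp
        simpa [Real.norm_eq_abs] using hC x p hp
    _ = C := by simp


/-- **Theorem 4.1 (performative multicalibration implies performative stability).**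
Outcomes are binary, sampled as `y ~ Ber (q x p)` after `x ~ Dx` and `p ~ f x`.
If `f` is `ε`-performatively multicalibrated with respect to the collection
`C = {(x,p) ↦ p − 1/2} ∪ {(x,p) ↦ h x − 1/2 : h ∈ H}` (for binary outcomes,
`E_{(x,p,y) ~ D(f)}[c (x,p) (y − p)] = ∫ x, ∫ p, c x p * (q x p − p)`), then `f` is
`2ε`-performatively stable w.r.t. `H` for the squared loss `ℓ (p,y) = (1/2)(y − p)²`:
for every `h ∈ H`,
`E_{(x,p,y) ~ D(f)} (1/2)(y − p)² ≤ E_{(x,p,y) ~ D(f)} (1/2)(y − h x)² + 2ε`. -/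
theorem performative_multicalibration_implies_stability
    {X : Type*} [MeasurableSpace X]
    (Dx : Measure X) [IsProbabilityMeasure Dx]
    (f : Kernel X ℝ) [IsMarkovKernel f] (hf : ∀ x, f x (Icc (0:ℝ) 1) = 1)
    (q : X → ℝ → ℝ) (hq_meas : Measurable (Function.uncurry q))
    (hq : ∀ x p, q x p ∈ Icc (0:ℝ) 1)
    (H : Set (X → ℝ))
    (hH : ∀ h ∈ H, Measurable h ∧ ∀ x, h x ∈ Icc (0:ℝ) 1)
    (ε : ℝ) (hε : 0 ≤ ε)
    (hmc₁ : |∫ x, ∫ p, (p - 1 / 2) * (q x p - p) ∂(f x) ∂Dx| ≤ ε)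
    (hmc₂ : ∀ h ∈ H, |∫ x, ∫ p, (h x - 1 / 2) * (q x p - p) ∂(f x) ∂Dx| ≤ ε) :
    ∀ h ∈ H,
      ∫ x, ∫ p, (q x p * (1 / 2 * (1 - p) ^ 2) + (1 - q x p) * (1 / 2 * (0 - p) ^ 2))
          ∂(f x) ∂Dx ≤
        (∫ x, ∫ p, (q x p * (1 / 2 * (1 - h x) ^ 2) + (1 - q x p) * (1 / 2 * (0 - h x) ^ 2))
          ∂(f x) ∂Dx) + 2 * ε := by
  intro h hh
  obtain ⟨hhm, hhb⟩ := hH h hh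
  -- four functions
  set g1 : X → ℝ → ℝ := fun x p =>
    q x p * (1 / 2 * (1 - p) ^ 2) + (1 - q x p) * (1 / 2 * (0 - p) ^ 2) with hg1
  set g2 : X → ℝ → ℝ := fun x p =>
    q x p * (1 / 2 * (1 - h x) ^ 2) + (1 - q x p) * (1 / 2 * (0 - h x) ^ 2) with hg2
  set c1 : X → ℝ → ℝ := fun x p => (p - 1 / 2) * (q x p - p) with hc1
  set c2 : X → ℝ → ℝ := fun x p => (h x - 1 / 2) * (q x p - p) with hc2
  have hm_q : Measurable (Function.uncurry q) := hq_meas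
  have hm_h : Measurable fun z : X × ℝ => h z.1 := hhm.comp measurable_fst
  have hm_p : Measurable fun z : X × ℝ => z.2 := measurable_snd
  have hm1 : Measurable (Function.uncurry g1) := by
    simp only [Function.uncurry, hg1]
    fun_prop
  have hm2 : Measurable (Function.uncurry g2) := by
    simp only [Function.uncurry, hg2]
    fun_prop
  have hmc1 : Measurable (Function.uncurry c1) := by
    simp only [Function.uncurry, hc1]
    fun_prop
  have hmc2 : Measurable (Function.uncurry c2) := by
    simp only [Function.uncurry, hc2]
    fun_prop
  have hb1 : ∀ x p, p ∈ Icc (0:ℝ) 1 → |g1 x p| ≤ 4 := by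
    intro x p hp
    obtain ⟨hp0, hp1⟩ := hp; obtain ⟨hq0, hq1⟩ := hq x p
    simp only [hg1]; rw [abs_le]; constructor <;> nlinarith [sq_nonneg (1 - p), sq_nonneg p]
  have hb2 : ∀ x p, p ∈ Icc (0:ℝ) 1 → |g2 x p| ≤ 4 := by
    intro x p _
    obtain ⟨h0, h1⟩ := hhb x; obtain ⟨hq0, hq1⟩ := hq x p
    simp only [hg2]; rw [abs_le]; constructor <;> nlinarith [sq_nonneg (1 - h x), sq_nonneg (h x)]
  have hbc1 : ∀ x p, p ∈ Icc (0:ℝ) 1 → |c1 x p| ≤ 4 := by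
    intro x p hp
    obtain ⟨hp0, hp1⟩ := hp; obtain ⟨hq0, hq1⟩ := hq x p
    simp only [hc1]; rw [abs_le]; constructor <;> nlinarith
  have hbc2 : ∀ x p, p ∈ Icc (0:ℝ) 1 → |c2 x p| ≤ 4 := by
    intro x p hp
    obtain ⟨hp0, hp1⟩ := hp; obtain ⟨h0, h1⟩ := hhb x; obtain ⟨hq0, hq1⟩ := hq x p
    simp only [hc2]; rw [abs_le]; constructor <;> nlinarith
  obtain ⟨hi1, ho1⟩ := my_aux Dx f hf g1 hm1 4 hb1
  obtain ⟨hi2, ho2⟩ := my_aux Dx f hf g2 hm2 4 hb2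
  obtain ⟨hic1, hoc1⟩ := my_aux Dx f hf c1 hmc1 4 hbc1
  obtain ⟨hic2, hoc2⟩ := my_aux Dx f hf c2 hmc2 4 hbc2
  -- pointwise inequality: g1 - g2 ≤ c2 - c1
  have key : ∀ x p, g1 x p - g2 x p ≤ c2 x p - c1 x p := by
    intro x p
    simp only [hg1, hg2, hc1, hc2]
    nlinarith [sq_nonneg (h x - p)]
  have step : ∫ x, ∫ p, g1 x p ∂(f x) ∂Dx - ∫ x, ∫ p, g2 x p ∂(f x) ∂Dx
      ≤ ∫ x, ∫ p, c2 x p ∂(f x) ∂Dx - ∫ x, ∫ p, c1 x p ∂(f x) ∂Dx := by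
    rw [← integral_sub ho1 ho2, ← integral_sub hoc2 hoc1]
    refine integral_mono (ho1.sub ho2) (hoc2.sub hoc1) fun x => ?_
    rw [← integral_sub (hi1 x) (hi2 x), ← integral_sub (hic2 x) (hic1 x)]
    exact integral_mono ((hi1 x).sub (hi2 x)) ((hic2 x).sub (hic1 x))
      (fun p => key x p)
  have h1 := abs_le.1 hmc₁
  have h2 := abs_le.1 (hmc₂ h hh)
  simp only [hg1, hg2, hc1, hc2] at step ⊢
  linarith [h1.1, h1.2, h2.1, h2.2, step]
end

section
/- Exact multicalibration error of the two-point mixture predictor: For every α ∈ (0,1/2] and every function c : [0,1] → ℝ, E_{f_α}[c(p)(y − p)] = (c(1/2) − c(1/2 + α))/200. -/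
open Set

/-- The distribution map of the featureless construction:
`y ~ Bernoulli (g p)` given prediction `p`, where `g p = p + 1/100` for `p ≤ 1/2`
and `g p = p − 1/100` for `p > 1/2`. -/
noncomputable def g (p : ℝ) : ℝ := if p ≤ 1 / 2 then p + 1 / 100 else p - 1 / 100

/-- Expectation of `φ (p, y)` under the randomized predictor `f_α` that predicts `1/2`
with probability `1/2` and `1/2 + α` with probability `1/2`, with binary outcome
`y ~ Bernoulli (g p)`. -/
noncomputable def Efα (α : ℝ) (φ : ℝ → ℝ → ℝ) : ℝ :=
  1 / 2 * (g (1 / 2) * φ (1 / 2) 1 + (1 - g (1 / 2)) * φ (1 / 2) 0) +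
    1 / 2 * (g (1 / 2 + α) * φ (1 / 2 + α) 1 + (1 - g (1 / 2 + α)) * φ (1 / 2 + α) 0)

/-- **Exact multicalibration error of the two-point mixture predictor.**
For every `α ∈ (0, 1/2]` and every function `c : [0,1] → ℝ`,
`E_{f_α}[c(p)(y − p)] = (c(1/2) − c(1/2 + α)) / 200`. -/
theorem Efα_calibration_error (α : ℝ) (hα : α ∈ Ioc (0:ℝ) (1 / 2)) (c : ℝ → ℝ) :
    Efα α (fun p y => c p * (y - p)) = (c (1 / 2) - c (1 / 2 + α)) / 200 := by
  obtain ⟨h1, h2⟩ := hα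
  have hg1 : g (1/2) = 1/2 + 1/100 := by simp [g]
  have hg2 : g (1/2 + α) = 1/2 + α - 1/100 := by
    rw [g, if_neg (by linarith)]
  rw [Efα, hg1, hg2]; ring
end

section
/- Theorem 5.1, part 1 (per-test version): For every continuous function c : [0,1] → [−1,1] and every ε > 0 there exists α₀ ∈ (0,1/2] such that for all α ∈ (0,α₀]: |E_{f_α}[c(p)(y − p)]| ≤ ε. In particular, for each fixed α, |E_{f_α}[c(p)(y − p)]| = |c(1/2) − c(1/2+α)|/200 ≤ 1/100 for every such c. -/
open Set

lemma Efα_eq (c : ℝ → ℝ) {α : ℝ} (hα : 0 < α) :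
    Efα α (fun p y => c p * (y - p)) = (c (1 / 2) - c (1 / 2 + α)) / 200 := by
  have h1 : (1:ℝ)/2 ≤ 1/2 := le_refl _
  have h2 : ¬ ((1:ℝ)/2 + α ≤ 1/2) := by linarith
  simp only [Efα, g, if_pos h1, if_neg h2]
  ring

/-- **Theorem 5.1, part 1 (per-test version).**
For every continuous `c : [0,1] → [−1,1]` and every `ε > 0` there exists `α₀ ∈ (0,1/2]`
such that for all `α ∈ (0,α₀]`, `|E_{f_α}[c(p)(y − p)]| ≤ ε`. In particular, for each
fixed `α`, `|E_{f_α}[c(p)(y − p)]| = |c(1/2) − c(1/2+α)|/200 ≤ 1/100`. -/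
theorem Efα_multicalibrated (c : ℝ → ℝ) (hc_cont : ContinuousOn c (Icc (0:ℝ) 1))
    (hc_bdd : ∀ p ∈ Icc (0:ℝ) 1, c p ∈ Icc (-1:ℝ) 1) :
    (∀ ε > 0, ∃ α₀ ∈ Ioc (0:ℝ) (1 / 2), ∀ α ∈ Ioc (0:ℝ) α₀,
        |Efα α (fun p y => c p * (y - p))| ≤ ε) ∧
      ∀ α ∈ Ioc (0:ℝ) (1 / 2),
        |Efα α (fun p y => c p * (y - p))| = |c (1 / 2) - c (1 / 2 + α)| / 200 ∧
          |Efα α (fun p y => c p * (y - p))| ≤ 1 / 100 := by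
  constructor
  · intro ε hε
    have hmem : (1:ℝ)/2 ∈ Icc (0:ℝ) 1 := by constructor <;> norm_num
    have hcw := hc_cont _ hmem
    rw [Metric.continuousWithinAt_iff] at hcw
    obtain ⟨δ, hδ, hδ'⟩ := hcw (200 * ε) (by linarith)
    refine ⟨min (δ/2) (1/2), ⟨lt_min (by linarith) (by norm_num), min_le_right _ _⟩, ?_⟩
    intro α ⟨hα0, hα1⟩
    have hα2 : α ≤ 1/2 := hα1.trans (min_le_right _ _)
    have hαδ : α < δ := lt_of_le_of_lt (hα1.trans (min_le_left _ _)) (by linarith)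
    rw [Efα_eq c hα0, abs_div]
    have hmem2 : (1:ℝ)/2 + α ∈ Icc (0:ℝ) 1 := ⟨by linarith, by linarith⟩
    have := hδ' hmem2 (by rw [Real.dist_eq]; simpa using by rw [abs_of_pos hα0] at *; linarith [abs_of_pos hα0] )
    rw [Real.dist_eq] at this
    have habs : |c (1/2) - c (1/2 + α)| < 200 * ε := by
      rw [abs_sub_comm]; exact this
    rw [abs_of_nonneg (by norm_num : (0:ℝ) ≤ 200)]
    linarith [abs_nonneg (c (1/2) - c (1/2 + α))]
  · intro α ⟨hα0, hα1⟩
    rw [Efα_eq c hα0, abs_div, abs_of_nonneg (by norm_num : (0:ℝ) ≤ 200)]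
    refine ⟨rfl, ?_⟩
    have h1 := hc_bdd (1/2) ⟨by norm_num, by norm_num⟩
    have h2 := hc_bdd (1/2 + α) ⟨by linarith, by linarith⟩
    obtain ⟨a, b⟩ := h1
    obtain ⟨d, e⟩ := h2
    have : |c (1 / 2) - c (1 / 2 + α)| ≤ 2 := by
      rw [abs_le]; constructor <;> linarith
    linarith
end

section
/- Theorem 5.1, part 2 (calibrated predictions can nearly maximize performative risk): For every α ∈ (0,1/2] and every deterministic prediction v ∈ [0,1]: E_{f_α}[(y − p)²] ≥ R(v) − (2α + 1/100), where R(v) = g(v)(1−v)² + (1−g(v))v² is the performative risk of v. Consequently E_{f_α}[(y − p)²] ≥ sup_{v∈[0,1]} R(v) − (2α + 1/100). -/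
open Set

/-- The performative risk of a deterministic prediction `v ∈ [0,1]`:
`R v = E_{y ~ Ber(g v)} (y − v)² = g v * (1 − v)² + (1 − g v) * v²`. -/
noncomputable def R (v : ℝ) : ℝ := g v * (1 - v) ^ 2 + (1 - g v) * v ^ 2

/-- **Theorem 5.1, part 2 (calibrated predictions can nearly maximize performative risk).**
For every `α ∈ (0,1/2]` and every deterministic prediction `v ∈ [0,1]`,
`E_{f_α}[(y − p)²] ≥ R v − (2α + 1/100)`; consequently
`E_{f_α}[(y − p)²] ≥ sup_{v ∈ [0,1]} R v − (2α + 1/100)`. -/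
theorem Efα_nearly_maximizes_performative_risk (α : ℝ) (hα : α ∈ Ioc (0:ℝ) (1 / 2)) :
    (∀ v ∈ Icc (0:ℝ) 1,
        Efα α (fun p y => (y - p) ^ 2) ≥ R v - (2 * α + 1 / 100)) ∧
      Efα α (fun p y => (y - p) ^ 2) ≥ sSup (R '' Icc (0:ℝ) 1) - (2 * α + 1 / 100) := by
  obtain ⟨hα0, hα1⟩ := hα
  have hE : Efα α (fun p y => (y - p) ^ 2) = 1/4 - α^2/2 + α/100 := by
    unfold Efα g
    rw [if_pos le_rfl, if_neg (by linarith)]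
    ring
  have hR : ∀ v ∈ Icc (0:ℝ) 1, R v ≤ 26/100 := by
    intro v hv
    obtain ⟨h0, h1⟩ := hv
    unfold R g
    split_ifs with h
    · nlinarith [sq_nonneg (v - 1/2)]
    · nlinarith [sq_nonneg (v - 1/2)]
  have key : ∀ v ∈ Icc (0:ℝ) 1,
      Efα α (fun p y => (y - p) ^ 2) ≥ R v - (2 * α + 1 / 100) := by
    intro v hv
    have := hR v hv
    rw [hE]
    nlinarith
  refine ⟨key, ?_⟩
  have hne : (R '' Icc (0:ℝ) 1).Nonempty := ⟨R 0, ⟨0, ⟨le_rfl, by norm_num⟩, rfl⟩⟩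
  have hsup : sSup (R '' Icc (0:ℝ) 1) ≤
      Efα α (fun p y => (y - p) ^ 2) + (2 * α + 1 / 100) := by
    apply csSup_le hne
    rintro x ⟨v, hv, rfl⟩
    linarith [key v hv]
  linarith
end

section
/- Gap between minimal and maximal performative risk in the construction: R(0) = R(1) = 1/100, R(1/2) = 1/4, and R(v) ≥ 1/100 for every v ∈ [0,1]; hence the minimal performative risk over deterministic predictions equals 1/100 while the maximal performative risk is at least 1/4. -/
open Set

lemma R_lb : ∀ v ∈ Icc (0:ℝ) 1, 1 / 100 ≤ R v := by
  rintro v ⟨h0, h1⟩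
  unfold R g
  split_ifs with h
  · nlinarith [sq_nonneg v, sq_nonneg (1 - v)]
  · push_neg at h
    nlinarith [sq_nonneg v, sq_nonneg (1 - v)]

lemma R_ub : ∀ v ∈ Icc (0:ℝ) 1, R v ≤ 1 := by
  rintro v ⟨h0, h1⟩
  unfold R g
  split_ifs with h
  · nlinarith [sq_nonneg v, sq_nonneg (1 - v)]
  · push_neg at h
    nlinarith [sq_nonneg v, sq_nonneg (1 - v)]

/-- **Gap between minimal and maximal performative risk in the construction.**
`R 0 = R 1 = 1/100`, `R (1/2) = 1/4`, and `R v ≥ 1/100` for every `v ∈ [0,1]`; hence the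
minimal performative risk over deterministic predictions equals `1/100` while the maximal
performative risk is at least `1/4`. -/
theorem performative_risk_gap :
    R 0 = 1 / 100 ∧ R 1 = 1 / 100 ∧ R (1 / 2) = 1 / 4 ∧
      (∀ v ∈ Icc (0:ℝ) 1, 1 / 100 ≤ R v) ∧
      IsLeast (R '' Icc (0:ℝ) 1) (1 / 100) ∧
      1 / 4 ≤ sSup (R '' Icc (0:ℝ) 1) := by
  have h0 : R 0 = 1 / 100 := by unfold R g; norm_num
  have h1 : R 1 = 1 / 100 := by unfold R g; norm_num
  have hhalf : R (1 / 2) = 1 / 4 := by unfold R g; norm_num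
  have hbdd : BddAbove (R '' Icc (0:ℝ) 1) := by
    refine ⟨1, ?_⟩
    rintro x ⟨v, hv, rfl⟩
    exact R_ub v hv
  refine ⟨h0, h1, hhalf, R_lb, ⟨⟨0, by norm_num, h0⟩, ?_⟩, ?_⟩
  · rintro x ⟨v, hv, rfl⟩; exact R_lb v hv
  · calc (1:ℝ)/4 = R (1/2) := hhalf.symm
      _ ≤ sSup (R '' Icc (0:ℝ) 1) := le_csSup hbdd ⟨1/2, by norm_num, rfl⟩
end

section
/- No deterministic calibrated prediction exists but randomized ones do: For every p ∈ [0,1], g(p) ≠ p (so no deterministic prediction is a fixed point of the distribution map), yet for every α ∈ (0,1/2] the randomized predictor f_α satisfies E_{f_α}[y] = E_{f_α}[p], i.e., the expected outcome it induces equals its expected prediction. -/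
open Set

/-- **No deterministic calibrated prediction exists, but randomized ones do.**
For every `p ∈ [0,1]`, `g p ≠ p` (no deterministic prediction is a fixed point of the
distribution map), yet for every `α ∈ (0,1/2]` the randomized predictor `f_α` satisfies
`E_{f_α}[y] = E_{f_α}[p]`. -/
theorem no_deterministic_fixed_point_but_randomized_calibrated :
    (∀ p ∈ Icc (0:ℝ) 1, g p ≠ p) ∧
      ∀ α ∈ Ioc (0:ℝ) (1 / 2),
        Efα α (fun _ y => y) = Efα α (fun p _ => p) := by
  constructor
  · intro p _ h
    unfold g at h
    split at h <;> linarith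
  · intro α hα
    have h1 : ¬ (1/2 + α ≤ (1:ℝ)/2) := by linarith [hα.1]
    simp only [Efα, g, le_refl, if_true, if_neg h1]
    ring
end

section
/- Equivalence of performative outcome indistinguishability and performative multicalibration for binary outcomes: Let f be a randomized predictor and A : X × [0,1] × {0,1} → ℝ a bounded measurable distinguisher. Then E_{x~D_x, p~f(x), y~Ber(q(x,p))}[A(x,p,y)] − E_{x~D_x, p~f(x), ỹ~Ber(p)}[A(x,p,ỹ)] = E_{x~D_x, p~f(x), y~Ber(q(x,p))}[(A(x,p,1) − A(x,p,0))·(y − p)]. In particular, the distinguishing advantage of A against f is at most ε if and only if |E_{(x,p,y)~D(f)}[c_A(x,p)(y − p)]| ≤ ε for c_A(x,p) = A(x,p,1) − A(x,p,0). -/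
open MeasureTheory ProbabilityTheory Set

/-- **Equivalence of performative outcome indistinguishability and performative
multicalibration for binary outcomes.** Outcomes are binary, sampled as `y ~ Ber (q x p)`
after `x ~ Dx` and `p ~ f x`. For a bounded measurable distinguisher `A`, the difference
between the expectation of `A (x, p, y)` over true outcomes `y ~ Ber (q x p)` and over
model outcomes `ỹ ~ Ber p` equals
`E[(A (x,p,1) − A (x,p,0)) (y − p)]`; in particular the distinguishing advantage of `A`
against `f` is at most `ε` iff `|E_{(x,p,y) ~ D(f)}[c_A (x,p) (y − p)]| ≤ ε` for
`c_A (x,p) = A (x,p,1) − A (x,p,0)`. (Expectations over the binary outcome are written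
out via the means `q x p` and `p`.) -/
theorem performative_oi_iff_multicalibration
    {X : Type*} [MeasurableSpace X]
    (Dx : Measure X) [IsProbabilityMeasure Dx]
    (f : Kernel X ℝ) [IsMarkovKernel f] (hf : ∀ x, f x (Icc (0:ℝ) 1) = 1)
    (q : X → ℝ → ℝ) (hq_meas : Measurable (Function.uncurry q))
    (hq : ∀ x p, q x p ∈ Icc (0:ℝ) 1)
    (A : X → ℝ → ℝ → ℝ)
    (hA_meas : Measurable fun z : X × ℝ × ℝ => A z.1 z.2.1 z.2.2)
    (M : ℝ) (hA_bdd : ∀ x p y, |A x p y| ≤ M)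
    (ε : ℝ) (hε : 0 ≤ ε) :
    ((∫ x, ∫ p, (q x p * A x p 1 + (1 - q x p) * A x p 0) ∂(f x) ∂Dx) -
        ∫ x, ∫ p, (p * A x p 1 + (1 - p) * A x p 0) ∂(f x) ∂Dx
      = ∫ x, ∫ p, (A x p 1 - A x p 0) * (q x p - p) ∂(f x) ∂Dx)
    ∧
    (|(∫ x, ∫ p, (q x p * A x p 1 + (1 - q x p) * A x p 0) ∂(f x) ∂Dx) -
        ∫ x, ∫ p, (p * A x p 1 + (1 - p) * A x p 0) ∂(f x) ∂Dx| ≤ ε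
      ↔ |∫ x, ∫ p, (A x p 1 - A x p 0) * (q x p - p) ∂(f x) ∂Dx| ≤ ε) := by
  -- measurability helpers
  have hA1 : Measurable (fun z : X × ℝ => A z.1 z.2 1) :=
    hA_meas.comp (by fun_prop : Measurable fun z : X × ℝ => (z.1, z.2, (1:ℝ)))
  have hA0 : Measurable (fun z : X × ℝ => A z.1 z.2 0) :=
    hA_meas.comp (by fun_prop : Measurable fun z : X × ℝ => (z.1, z.2, (0:ℝ)))
  have hqm : Measurable (fun z : X × ℝ => q z.1 z.2) := hq_meas
  set F1 : X → ℝ → ℝ := fun x p => q x p * A x p 1 + (1 - q x p) * A x p 0 with hF1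
  set F2 : X → ℝ → ℝ := fun x p => p * A x p 1 + (1 - p) * A x p 0 with hF2
  have hF1m : Measurable (fun z : X × ℝ => F1 z.1 z.2) := by
    exact (hqm.mul hA1).add ((measurable_const.sub hqm).mul hA0)
  have hF2m : Measurable (fun z : X × ℝ => F2 z.1 z.2) := by
    exact (measurable_snd.mul hA1).add ((measurable_const.sub measurable_snd).mul hA0)
  have hne : Nonempty X := by
    by_contra h
    have h1 : Dx Set.univ = 1 := measure_univ
    rw [Set.univ_eq_empty_iff.mpr (not_nonempty_iff.mp h)] at h1
    simp at h1
  have hM : 0 ≤ M := le_trans (abs_nonneg _) (hA_bdd hne.some 0 0)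
  -- a.e. bound facts on f x
  have hae : ∀ x, ∀ᵐ p ∂(f x), p ∈ Icc (0:ℝ) 1 := by
    intro x
    have : (f x) (Icc (0:ℝ) 1)ᶜ = 0 := by
      rw [measure_compl measurableSet_Icc (measure_ne_top _ _), hf x, measure_univ]
      simp
    exact ae_iff.2 this
  have hbd1 : ∀ x p, |F1 x p| ≤ M := by
    intro x p
    have h1 := hA_bdd x p 1; have h0 := hA_bdd x p 0
    have hq0 := (hq x p).1; have hq1 := (hq x p).2
    calc |F1 x p| ≤ |q x p * A x p 1| + |(1 - q x p) * A x p 0| := abs_add_le _ _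
      _ = q x p * |A x p 1| + (1 - q x p) * |A x p 0| := by
          rw [abs_mul, abs_mul, abs_of_nonneg hq0, abs_of_nonneg (by linarith : (0:ℝ) ≤ 1 - q x p)]
      _ ≤ q x p * M + (1 - q x p) * M := by
          gcongr <;> linarith
      _ = M := by ring
  have hbd2 : ∀ x, ∀ p ∈ Icc (0:ℝ) 1, |F2 x p| ≤ M := by
    intro x p hp
    have h1 := hA_bdd x p 1; have h0 := hA_bdd x p 0
    calc |F2 x p| ≤ |p * A x p 1| + |(1 - p) * A x p 0| := abs_add_le _ _
      _ = p * |A x p 1| + (1 - p) * |A x p 0| := by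
          rw [abs_mul, abs_mul, abs_of_nonneg hp.1, abs_of_nonneg (by linarith [hp.2] : (0:ℝ) ≤ 1 - p)]
      _ ≤ p * M + (1 - p) * M := by gcongr <;> linarith [hp.1, hp.2, abs_nonneg (A x p 1)]
      _ = M := by ring
  -- inner integrability
  have hint1 : ∀ x, Integrable (fun p => F1 x p) (f x) := by
    intro x
    refine Integrable.mono' (integrable_const M)
      (hF1m.comp (measurable_prodMk_left)).aestronglyMeasurable ?_
    exact Filter.Eventually.of_forall fun p => by simpa using hbd1 x p
  have hint2 : ∀ x, Integrable (fun p => F2 x p) (f x) := by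
    intro x
    refine Integrable.mono' (integrable_const M)
      (hF2m.comp (measurable_prodMk_left)).aestronglyMeasurable ?_
    exact (hae x).mono fun p hp => by simpa using hbd2 x p hp
  -- inner equality
  have hinner : ∀ x, (∫ p, F1 x p ∂(f x)) - ∫ p, F2 x p ∂(f x)
      = ∫ p, (A x p 1 - A x p 0) * (q x p - p) ∂(f x) := by
    intro x
    rw [← integral_sub (hint1 x) (hint2 x)]
    congr 1; funext p; simp only [hF1, hF2]; ring
  -- outer integrands
  have hG1m : StronglyMeasurable (fun x => ∫ p, F1 x p ∂(f x)) :=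
    (hF1m.stronglyMeasurable).integral_kernel_prod_right'
  have hG2m : StronglyMeasurable (fun x => ∫ p, F2 x p ∂(f x)) :=
    (hF2m.stronglyMeasurable).integral_kernel_prod_right'
  have hGint1 : Integrable (fun x => ∫ p, F1 x p ∂(f x)) Dx := by
    refine Integrable.mono' (integrable_const M) hG1m.aestronglyMeasurable ?_
    refine Filter.Eventually.of_forall fun x => ?_
    calc ‖∫ p, F1 x p ∂(f x)‖ ≤ M * ((f x) Set.univ).toReal :=
          norm_integral_le_of_norm_le_const
            (Filter.Eventually.of_forall fun p => by simpa using hbd1 x p)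
      _ = M := by simp
  have hGint2 : Integrable (fun x => ∫ p, F2 x p ∂(f x)) Dx := by
    refine Integrable.mono' (integrable_const M) hG2m.aestronglyMeasurable ?_
    refine Filter.Eventually.of_forall fun x => ?_
    calc ‖∫ p, F2 x p ∂(f x)‖ ≤ M * ((f x) Set.univ).toReal :=
          norm_integral_le_of_norm_le_const
            ((hae x).mono fun p hp => by simpa using hbd2 x p hp)
      _ = M := by simp
  have hmain : (∫ x, ∫ p, F1 x p ∂(f x) ∂Dx) - ∫ x, ∫ p, F2 x p ∂(f x) ∂Dx
      = ∫ x, ∫ p, (A x p 1 - A x p 0) * (q x p - p) ∂(f x) ∂Dx := by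
    rw [← integral_sub hGint1 hGint2]
    exact integral_congr_ae (Filter.Eventually.of_forall fun x => hinner x)
  exact ⟨hmain, by rw [hmain]⟩
end
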